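/- arXiv:2211.11102 — 7 statements merged into one kernel-verified Lean document; each statement's English description precedes it below -/
import Mathlib

section
/- Let (G_{ij}, p_{ij}, h_{ij}) be a direct sequence of towers of groups in which every G_{ij} is a finitely generated abelian group, and set Γ_j = lim_i G_{ij}. Suppose that for every j and every γ ∈ Γ_j there exists k ≥ j such that the composite homomorphism Γ_j → Γ_k sends γ to 0 (i.e., colim_j Γ_j = 0). Then for each j there exists k > j such that the composite homomorphism Γ_j → Γ_k is trivial (the zero homomorphism). -/
/-!
`Γ_j` is a closed subgroup of the product of the countable discrete groups `G_{ij}`, hence a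
Polish group, and it is the countable union of the closed subgroups of threads that die at
stage `k`. By Baire one of them, at stage `k₀`, is open, so it contains every thread vanishing
at a level `N`. The images at level `N` of the threads dying at stage `k` form an increasing chain
of subgroups of the finitely generated group `G_{Nj}`, which stabilizes at some stage `n`: every
thread agrees at level `N` with one dying at stage `n`, and their difference dies at stage `k₀`.
-/

/-- The composite homomorphism `G_{i,j} → G_{i,j+k}` of the horizontal maps of a
direct sequence of towers of abelian groups (the identity when `k = 0`). -/
def hIter (G : ℕ → ℕ → Type*) [∀ i j, AddCommGroup (G i j)]
    (h : ∀ i j, G i j →+ G i (j + 1)) (i j : ℕ) : ∀ k, G i j →+ G i (j + k)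
  | 0 => AddMonoidHom.id _
  | k + 1 => (h i (j + k)).comp (hIter G h i j k)

open PiNat

theorem AddGroup.FG.countable (A : Type*) [AddCommGroup A] [AddGroup.FG A] : Countable A := by
  have : Module.Finite ℤ A := Module.Finite.iff_addGroup_fg.mpr ‹_›
  obtain ⟨n, f, hf⟩ := Module.Finite.exists_fin' ℤ A
  exact hf.countable

theorem AddSubgroup.exists_isOpen_of_isClosed_of_cover {Γ ι : Type*} [AddGroup Γ]
    [TopologicalSpace Γ] [SeparatelyContinuousAdd Γ] [BaireSpace Γ] [Countable ι]
    (D : ι → AddSubgroup Γ) (hD : ∀ k, IsClosed (D k : Set Γ)) (hcover : ∀ x, ∃ k, x ∈ D k) :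
    ∃ k, IsOpen (D k : Set Γ) := by
  obtain ⟨k, x, hx⟩ := nonempty_interior_of_iUnion_of_closed hD
    (Set.eq_univ_of_forall fun x => Set.mem_iUnion.mpr (hcover x))
  exact ⟨k, (D k).isOpen_of_mem_nhds (mem_interior_iff_mem_nhds.mp hx)⟩

section Tower

variable {X : ℕ → Type*}

def threads [∀ i, AddGroup (X i)] (p : ∀ i, X (i + 1) →+ X i) : AddSubgroup (∀ i, X i) where
  carrier := {g | ∀ i, p i (g (i + 1)) = g i}
  add_mem' ha hb i := by simp [ha i, hb i]
  zero_mem' i := by simp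
  neg_mem' ha i := by simp [ha i]

theorem mem_threads [∀ i, AddGroup (X i)] {p : ∀ i, X (i + 1) →+ X i} {g : ∀ i, X i} :
    g ∈ threads p ↔ ∀ i, p i (g (i + 1)) = g i := Iff.rfl

theorem threads_apply_eq_zero_of_le [∀ i, AddGroup (X i)] {p : ∀ i, X (i + 1) →+ X i}
    {g : ∀ i, X i} (hg : g ∈ threads p) {N : ℕ} (hN : g N = 0) {i : ℕ} (hi : i ≤ N) :
    g i = 0 :=
  Nat.decreasingInduction (fun k _ hk => by rw [← hg k, hk, map_zero]) hN hi

theorem isClosed_threads [∀ i, AddGroup (X i)] [∀ i, TopologicalSpace (X i)]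
    [∀ i, DiscreteTopology (X i)] (p : ∀ i, X (i + 1) →+ X i) :
    IsClosed (threads p : Set (∀ i, X i)) := by
  have : (threads p : Set (∀ i, X i)) = ⋂ i, {g | p i (g (i + 1)) = g i} := by
    ext g; simp [mem_threads]
  rw [this]
  exact isClosed_iInter fun i =>
    isClosed_eq (continuous_of_discreteTopology.comp (continuous_apply _)) (continuous_apply i)

theorem exists_cylinder_subset_of_cover [∀ i, AddGroup (X i)] [∀ i, TopologicalSpace (X i)]
    [∀ i, DiscreteTopology (X i)] [∀ i, Countable (X i)] {S : AddSubgroup (∀ i, X i)}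
    (hS : IsClosed (S : Set (∀ i, X i))) {D : ℕ → AddSubgroup (∀ i, X i)}
    (hD : ∀ k, IsClosed (D k : Set (∀ i, X i))) (hcover : ∀ g ∈ S, ∃ k, g ∈ D k) :
    ∃ k N, ∀ g ∈ S, g ∈ cylinder 0 N → g ∈ D k := by
  have : PolishSpace S := hS.polishSpace
  obtain ⟨k, hk⟩ :=
    AddSubgroup.exists_isOpen_of_isClosed_of_cover (fun k => (D k).addSubgroupOf S)
      (fun k => (hD k).preimage continuous_subtype_val) (fun g => hcover g g.2)
  obtain ⟨U, hU, hUD⟩ := (mem_nhds_subtype _ _ _).mp (hk.mem_nhds (zero_mem _))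
  obtain ⟨_, ⟨x, N, rfl⟩, h0, hxU⟩ := (isTopologicalBasis_cylinders X).mem_nhds_iff.mp hU
  refine ⟨k, N, fun g hg hgN => hUD (a := ⟨g, hg⟩) (hxU ?_)⟩
  rwa [← mem_cylinder_iff_eq.mp h0]

theorem AddSubgroup.exists_le_of_inf_ker_le {Γ A : Type*} [AddGroup Γ] [AddCommGroup A]
    [IsNoetherian ℤ A] (f : Γ →+ A) {S : AddSubgroup Γ} {D : ℕ → AddSubgroup Γ}
    (hD : Monotone D) (hcover : ∀ g ∈ S, ∃ k, g ∈ D k) {k₀ : ℕ} (hker : S ⊓ f.ker ≤ D k₀) :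
    ∃ k, S ≤ D k := by
  let R : ℕ →o Submodule ℤ A :=
    ⟨fun k => ((S ⊓ D k).map f).toIntSubmodule, fun k l hkl =>
      AddSubgroup.toIntSubmodule.monotone (AddSubgroup.map_mono (inf_le_inf_left S (hD hkl)))⟩
  obtain ⟨n, hn⟩ := monotone_stabilizes_iff_noetherian.mpr ‹_› R
  refine ⟨max n k₀, fun g hg => ?_⟩
  obtain ⟨k, hk⟩ := hcover g hg
  have hgR : f g ∈ R n := by
    rw [hn (max n k) (le_max_left _ _)]
    exact ⟨g, ⟨hg, hD (le_max_right _ _) hk⟩, rfl⟩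
  obtain ⟨g', ⟨hg'S, hg'D⟩, hfg'⟩ := hgR
  have hdiff : g - g' ∈ D k₀ := hker ⟨S.sub_mem hg hg'S, by simp [hfg']⟩
  simpa using add_mem (hD (le_max_right _ _) hdiff) (hD (le_max_left _ _) hg'D)

theorem exists_threads_le_pi [∀ i, AddCommGroup (X i)] [∀ i, AddGroup.FG (X i)]
    (p : ∀ i, X (i + 1) →+ X i) {H : ℕ → ∀ i, AddSubgroup (X i)} (hH : Monotone H)
    (hcover : ∀ g ∈ threads p, ∃ k, g ∈ AddSubgroup.pi Set.univ (H k)) :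
    ∃ k, threads p ≤ AddSubgroup.pi Set.univ (H k) := by
  let (i : ℕ) : TopologicalSpace (X i) := ⊥
  have (i : ℕ) : DiscreteTopology (X i) := ⟨rfl⟩
  have (i : ℕ) : Countable (X i) := AddGroup.FG.countable (X i)
  obtain ⟨k₀, N, hN⟩ := exists_cylinder_subset_of_cover (isClosed_threads p)
    (fun k => isClosed_set_pi fun i _ => isClosed_discrete _) hcover
  exact AddSubgroup.exists_le_of_inf_ker_le (Pi.evalAddMonoidHom X N)
    (fun _ _ hkl _ hg i hi => hH hkl i (hg i hi)) hcover
    fun g ⟨hg, hgN⟩ => hN g hg <| mem_cylinder_iff.mpr fun i hi =>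
      threads_apply_eq_zero_of_le hg hgN hi.le

end Tower

theorem hIter_ker_mono (G : ℕ → ℕ → Type*) [∀ i j, AddCommGroup (G i j)]
    (h : ∀ i j, G i j →+ G i (j + 1)) (i j : ℕ) :
    Monotone fun k => (hIter G h i j k).ker :=
  monotone_nat_of_le_succ fun k x hx => by
    simp only [AddMonoidHom.mem_ker] at hx ⊢
    change h i (j + k) (hIter G h i j k x) = 0
    rw [hx, map_zero]

theorem stmt_1_general (G : ℕ → ℕ → Type*) [∀ i j, AddCommGroup (G i j)]
    [∀ i j, AddGroup.FG (G i j)]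
    (p : ∀ i j, G (i + 1) j →+ G i j) (h : ∀ i j, G i j →+ G i (j + 1))
    (htriv : ∀ j (g : ∀ i, G i j), (∀ i, p i j (g (i + 1)) = g i) →
      ∃ k, ∀ i, hIter G h i j k (g i) = 0) :
    ∀ j, ∃ k, 0 < k ∧ ∀ g : ∀ i, G i j, (∀ i, p i j (g (i + 1)) = g i) →
      ∀ i, hIter G h i j k (g i) = 0 := by
  intro j
  obtain ⟨k, hk⟩ := exists_threads_le_pi (fun i => p i j)
    (H := fun k i => (hIter G h i j k).ker) (fun k l hkl i => hIter_ker_mono G h i j hkl)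
    fun g hg => (htriv j g (mem_threads.mp hg)).imp fun k hk i _ => hk i
  exact ⟨k + 1, k.succ_pos, fun g hg i =>
    hIter_ker_mono G h i j k.le_succ (hk (show g ∈ threads _ from hg) i (Set.mem_univ i))⟩

/-- Theorem A(a): for a direct sequence of towers of finitely generated abelian groups,
if the colimit of the inverse limits `Γ_j = lim_i G_{ij}` is trivial, then for each `j`
there is `k > j` such that the composite homomorphism `Γ_j → Γ_k` is trivial.
(Threads of the `j`-th tower are functions `g : ∀ i, G i j` with `p i j (g (i+1)) = g i`;
the induced maps on inverse limits are applied coordinatewise.) -/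
theorem stmt_1 (G : ℕ → ℕ → Type*) [∀ i j, AddCommGroup (G i j)]
    [∀ i j, AddGroup.FG (G i j)]
    (p : ∀ i j, G (i + 1) j →+ G i j) (h : ∀ i j, G i j →+ G i (j + 1))
    (hcomm : ∀ i j (g : G (i + 1) j), h i j (p i j g) = p i (j + 1) (h (i + 1) j g))
    (htriv : ∀ j (g : ∀ i, G i j), (∀ i, p i j (g (i + 1)) = g i) →
      ∃ k, ∀ i, hIter G h i j k (g i) = 0) :
    ∀ j, ∃ k, 0 < k ∧ ∀ g : ∀ i, G i j, (∀ i, p i j (g (i + 1)) = g i) →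
      ∀ i, hIter G h i j k (g i) = 0 :=
  stmt_1_general G p h htriv
end

section
/- Let (G_{ij}, p_{ij}, h_{ij}) be a direct sequence of towers of groups in which every G_{ij} is a countable abelian group. For each j let Γ_j = lim¹_i G_{ij}, the cokernel of the homomorphism d_j : ∏_i G_{ij} → ∏_i G_{ij} defined by d_j(g)_i = g_i − p_{ij}(g_{i+1}); the horizontal maps induce homomorphisms Γ_j → Γ_{j+1}, and composites Γ_j → Γ_k for j ≤ k. Suppose that for every j and every γ ∈ Γ_j there exists k ≥ j such that the composite homomorphism Γ_j → Γ_k sends γ to 0 (i.e., colim_j Γ_j = 0). Then for each j there exists k > j such that the composite homomorphism Γ_j → Γ_k is the zero homomorphism. -/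
open Finset PiNat

theorem isOpen_closure_addSubgroup_of_nonempty_interior_closure {X : Type*} [AddGroup X]
    [TopologicalSpace X] [IsTopologicalAddGroup X] (H : AddSubgroup X) {s : Set X}
    (hs : ∀ a ∈ s, ∀ b ∈ s, a - b ∈ H) (hint : (interior (closure s)).Nonempty) :
    IsOpen (closure (H : Set X)) := by
  obtain ⟨x, hx⟩ := hint
  obtain ⟨b, hb⟩ : s.Nonempty := by
    by_contra hne
    simp [Set.not_nonempty_iff_eq_empty.1 hne] at hx
  have hsub : closure s ⊆ (· - b) ⁻¹' closure H :=
    closure_minimal (fun a ha => subset_closure (hs a ha b hb))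
      (isClosed_closure.preimage (continuous_sub_right b))
  have hnhds : closure (H : Set X) ∈ nhds (x - b) :=
    Filter.mem_of_superset ((isOpenMap_sub_right b _ isOpen_interior).mem_nhds ⟨x, hx, rfl⟩)
      (Set.image_subset_iff.2 (interior_subset.trans hsub))
  rw [← AddSubgroup.topologicalClosure_coe] at hnhds ⊢
  exact H.topologicalClosure.isOpen_of_mem_nhds hnhds

theorem exists_eq_sub_of_forall_ge_eq_zero {E : ℕ → Type*} [∀ i, AddCommGroup (E i)]
    (p : ∀ i, E (i + 1) →+ E i) (N : ℕ) (f : ∀ i, E i) (hf : ∀ i, N ≤ i → f i = 0) :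
    ∃ c : ∀ i, E i, ∀ i, f i = c i - p i (c (i + 1)) := by
  induction N generalizing f with
  | zero => exact ⟨0, fun i => by simp [hf i (Nat.zero_le i)]⟩
  | succ N ih =>
    -- subtract `d` of the family concentrated in degree `N` with value `f N`
    obtain ⟨c, hc⟩ := ih (f - Pi.single N (f N) + fun i => p i (Pi.single N (f N) (i + 1)))
      fun i hi => by
        rcases hi.eq_or_lt with rfl | hlt
        · simp
        · simp [hf i hlt, hlt.ne', (hlt.trans (Nat.lt_succ_self i)).ne']
    refine ⟨c + Pi.single N (f N), fun i => ?_⟩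
    have := hc i
    simp only [Pi.add_apply, Pi.sub_apply, map_add] at this ⊢
    rw [← sub_eq_zero] at this ⊢
    rw [← this]
    abel

section Tower

variable {G : ℕ → ℕ → Type*} [∀ i j, AddCommGroup (G i j)]
  (p : ∀ i j, G (i + 1) j →+ G i j) (h : ∀ i j, G i j →+ G i (j + 1))

/-- `c` is a `d_{j+k}`-primitive of the image of `a`, so the class of `a` in `Γ_j` dies in
`Γ_{j+k}`. -/
def KilledBy (j k : ℕ) (a : ∀ i, G i j) (c : ∀ i, G i (j + k)) : Prop :=
  ∀ i, hIter G h i j k (a i) = c i - p i (j + k) (c (i + 1))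

variable {p h} {j k : ℕ}

theorem KilledBy.zero : KilledBy p h j k 0 0 := fun i => by simp

theorem KilledBy.add {a a' : ∀ i, G i j} {c c' : ∀ i, G i (j + k)}
    (hc : KilledBy p h j k a c) (hc' : KilledBy p h j k a' c') :
    KilledBy p h j k (a + a') (c + c') := fun i => by
  simp only [Pi.add_apply, map_add, hc i, hc' i]
  abel

theorem KilledBy.neg {a : ∀ i, G i j} {c : ∀ i, G i (j + k)} (hc : KilledBy p h j k a c) :
    KilledBy p h j k (-a) (-c) := fun i => by
  simp only [Pi.neg_apply, map_neg, hc i]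
  abel

theorem KilledBy.sub {a a' : ∀ i, G i j} {c c' : ∀ i, G i (j + k)}
    (hc : KilledBy p h j k a c) (hc' : KilledBy p h j k a' c') :
    KilledBy p h j k (a - a') (c - c') := by
  simpa only [sub_eq_add_neg] using hc.add hc'.neg

theorem KilledBy.succ
    (hcomm : ∀ i j (g : G (i + 1) j), h i j (p i j g) = p i (j + 1) (h (i + 1) j g))
    {a : ∀ i, G i j} {c : ∀ i, G i (j + k)} (hc : KilledBy p h j k a c) :
    KilledBy p h j (k + 1) a (fun i => h i (j + k) (c i)) := fun i => by
  simp only [hIter, AddMonoidHom.coe_comp, Function.comp_apply, hc i, map_sub, hcomm]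
  rfl

/-- Coordinate `i` of the locally finite sums `∑ₜ aₜ`, `∑ₜ cₜ` only sees `t ≤ i`; `hc` makes
this truncation compatible with `d`. -/
theorem KilledBy.sum {a : ℕ → ∀ i, G i j} {c : ℕ → ∀ i, G i (j + k)}
    (hac : ∀ t, KilledBy p h j k (a t) (c t)) (hc : ∀ t, ∀ i < t + 1, c t i = 0) :
    KilledBy p h j k (fun i => ∑ t ∈ range (i + 1), a t i)
      (fun i => ∑ t ∈ range (i + 1), c t i) := fun i => by
  dsimp only
  rw [sum_range_succ (fun t => c t (i + 1)) (i + 1), hc (i + 1) (i + 1) (Nat.lt_succ_self _),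
    add_zero, map_sum, map_sum, ← sum_sub_distrib]
  exact sum_congr rfl fun t _ => hac t i

variable (p h j k) in
def killedSubgroup (m : ℕ) : AddSubgroup (∀ i, G i j) where
  carrier := {a | ∃ c, KilledBy p h j k a c ∧ ∀ i < m, c i = 0}
  zero_mem' := ⟨0, KilledBy.zero, fun _ _ => rfl⟩
  add_mem' := fun ⟨c, hc, hc0⟩ ⟨c', hc', hc0'⟩ =>
    ⟨c + c', hc.add hc', fun i hi => by simp [hc0 i hi, hc0' i hi]⟩
  neg_mem' := fun ⟨c, hc, hc0⟩ => ⟨-c, hc.neg, fun i hi => by simp [hc0 i hi]⟩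

section Topology

variable [∀ i j, TopologicalSpace (G i j)] [∀ i j, DiscreteTopology (G i j)]

theorem exists_forall_isOpen_closure_killedSubgroup [∀ i j, Countable (G i j)]
    (htriv : ∀ g : ∀ i, G i j, ∃ k c, KilledBy p h j k g c) :
    ∃ k, ∀ m, IsOpen (closure (killedSubgroup p h j k m : Set (∀ i, G i j))) := by
  by_contra! hnot
  choose m hm using hnot
  let T : (Σ k, ∀ i : Fin (m k), G i (j + k)) → Set (∀ i, G i j) := fun κ =>
    {a | ∃ c, KilledBy p h j κ.1 a c ∧ ∀ i : Fin (m κ.1), c i = κ.2 i}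
  have hcover : ⋃ κ, closure (T κ) = Set.univ := by
    refine Set.eq_univ_of_forall fun a => ?_
    obtain ⟨k, c, hc⟩ := htriv a
    exact Set.mem_iUnion.2 ⟨⟨k, fun i => c i⟩, subset_closure ⟨c, hc, fun _ => rfl⟩⟩
  obtain ⟨κ, hκ⟩ := nonempty_interior_of_iUnion_of_closed (fun _ => isClosed_closure) hcover
  refine hm κ.1 (isOpen_closure_addSubgroup_of_nonempty_interior_closure _ ?_ hκ)
  rintro a ⟨c, hc, hcκ⟩ b ⟨c', hc', hc'κ⟩
  exact ⟨c - c', hc.sub hc', fun i hi => by simp [hcκ ⟨i, hi⟩, hc'κ ⟨i, hi⟩]⟩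

theorem exists_forall_mem_cylinder_killedBy
    (hS : ∀ m, IsOpen (closure (killedSubgroup p h j k m : Set (∀ i, G i j)))) :
    ∃ N, ∀ g ∈ cylinder 0 N, ∃ c, KilledBy p h j k g c := by
  have hnhds : ∀ m, ∃ n, m ≤ n ∧
      cylinder 0 n ⊆ closure (killedSubgroup p h j k m : Set (∀ i, G i j)) := by
    intro m
    obtain ⟨_, ⟨x, n, rfl⟩, h0, hsub⟩ := (isTopologicalBasis_cylinders _).exists_subset_of_mem_open
      (subset_closure (zero_mem _)) (hS m)
    rw [← mem_cylinder_iff_eq.1 h0] at hsub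
    exact ⟨max n m, le_max_right _ _, (cylinder_anti _ (le_max_left _ _)).trans hsub⟩
  choose n hmn hn using hnhds
  have step : ∀ t (r : ∀ i, G i j), ∃ a, r ∈ cylinder 0 (n (t + 1)) →
      a ∈ killedSubgroup p h j k (t + 1) ∧ r - a ∈ cylinder 0 (n (t + 2)) := by
    intro t r
    by_cases hr : r ∈ cylinder 0 (n (t + 1))
    · obtain ⟨a, har, ha⟩ := mem_closure_iff.1 (hn (t + 1) hr) _
        (isOpen_cylinder _ r (n (t + 2))) (self_mem_cylinder _ _)
      exact ⟨a, fun _ => ⟨ha, fun i hi => by simp [har i hi]⟩⟩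
    · exact ⟨0, fun h => absurd h hr⟩
  choose a ha using step
  refine ⟨n 1, fun g hg => ?_⟩
  let R : ℕ → ∀ i, G i j := fun t => Nat.rec g (fun t r => r - a t r) t
  have hR : ∀ t, R t ∈ cylinder 0 (n (t + 1)) := by
    intro t
    induction t with
    | zero => exact hg
    | succ t ih => exact (ha t _ ih).2
  choose c hc hc0 using fun t => (ha t (R t) (hR t)).1
  have hsum : ∀ T, R T = g - ∑ t ∈ range T, a t (R t) := by
    intro T
    induction T with
    | zero => simp [R]
    | succ T ih => rw [sum_range_succ, sub_add_eq_sub_sub, ← ih]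
  have hg_eq : g = fun i => ∑ t ∈ range (i + 1), a t (R t) i := by
    funext i
    have hRi : R (i + 1) i = 0 := hR (i + 1) i (by have := hmn (i + 1 + 1); omega)
    rwa [hsum (i + 1), Pi.sub_apply, Finset.sum_apply, sub_eq_zero] at hRi
  exact ⟨_, hg_eq ▸ KilledBy.sum hc hc0⟩

end Topology

theorem exists_forall_killedBy [∀ i j, Countable (G i j)]
    (htriv : ∀ g : ∀ i, G i j, ∃ k c, KilledBy p h j k g c) :
    ∃ k, ∀ g, ∃ c, KilledBy p h j k g c := by
  let _ : ∀ i j, TopologicalSpace (G i j) := fun _ _ => ⊥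
  have _ : ∀ i j, DiscreteTopology (G i j) := fun _ _ => ⟨rfl⟩
  obtain ⟨k, hk⟩ := exists_forall_isOpen_closure_killedSubgroup htriv
  obtain ⟨N, hN⟩ := exists_forall_mem_cylinder_killedBy hk
  refine ⟨k, fun g => ?_⟩
  let tail : ∀ i, G i j := fun i => if i < N then 0 else g i
  obtain ⟨c, hc⟩ := hN tail fun i hi => if_pos hi
  obtain ⟨c', hc'⟩ := exists_eq_sub_of_forall_ge_eq_zero (fun i => p i (j + k)) N
    (fun i => hIter G h i j k ((g - tail) i)) fun i hi => by simp [tail, not_lt.2 hi]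
  have hg : KilledBy p h j k (g - tail + tail) (c' + c) := KilledBy.add hc' hc
  exact ⟨_, sub_add_cancel g tail ▸ hg⟩

end Tower

/-- Theorem A(c): for a direct sequence of towers of countable abelian groups, set
`Γ_j = lim¹_i G_{ij}`, the cokernel of `d_j : ∏_i G_{ij} → ∏_i G_{ij}`,
`d_j(g)_i = g_i − p_{ij}(g_{i+1})`.  An element of `Γ_j` is (the class of) a family
`g : ∀ i, G i j`; its image in `Γ_{j+k}` vanishes iff the coordinatewise image of `g`
under the composite horizontal map lies in the range of `d_{j+k}`.  If the colimit of
the `Γ_j` is trivial, then for each `j` there is `k > j` such that the composite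
homomorphism `Γ_j → Γ_k` is the zero homomorphism. -/
theorem stmt_3 (G : ℕ → ℕ → Type*) [∀ i j, AddCommGroup (G i j)]
    [∀ i j, Countable (G i j)]
    (p : ∀ i j, G (i + 1) j →+ G i j) (h : ∀ i j, G i j →+ G i (j + 1))
    (hcomm : ∀ i j (g : G (i + 1) j), h i j (p i j g) = p i (j + 1) (h (i + 1) j g))
    (htriv : ∀ j (g : ∀ i, G i j), ∃ k, ∃ c : ∀ i, G i (j + k),
      ∀ i, hIter G h i j k (g i) = c i - p i (j + k) (c (i + 1))) :
    ∀ j, ∃ k, 0 < k ∧ ∀ g : ∀ i, G i j, ∃ c : ∀ i, G i (j + k),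
      ∀ i, hIter G h i j k (g i) = c i - p i (j + k) (c (i + 1)) := by
  intro j
  obtain ⟨k, hk⟩ := exists_forall_killedBy (htriv j)
  refine ⟨k + 1, k.succ_pos, fun g => ?_⟩
  obtain ⟨c, hc⟩ := hk g
  exact ⟨_, hc.succ hcomm⟩
end

section
/- Let (A_i, α_i), (B_i, β_i), (C_i, γ_i) be towers of abelian groups, and let f = (f_i : A_i → C_i), u = (u_i : A_i → B_i), v = (v_i : B_i → C_i) be level morphisms with v_i ∘ u_i = f_i for all i. Suppose that the induced homomorphism lim¹_i A_i → lim¹_i B_i is the zero map and the induced homomorphism lim_i B_i → lim_i C_i is the zero map. Then there exist a tower of abelian groups (G_i, δ_i) and level morphisms s = (s_i : A_i → G_i), t = (t_i : G_i → C_i) with t_i ∘ s_i = f_i for all i, such that lim_i G_i = 0 and lim¹_i G_i = 0. -/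
/-!
Take `G_i = ∏_{j ≥ i} A_j ⧸ d (∏_{j > i} A_j)`, bonded by the inclusions `∏_{j > i} ⊆ ∏_{j ≥ i}`,
with `s_i` the inclusion of the factor `A_i`. Families `w_k` supported in degrees `≥ k` have
coordinatewise finite sums `∑_{k ≥ i} w_k`; with them a thread of `G` telescopes to zero and
`c_i - δ c_{i+1} = g_i` is solved by `c_i = ∑_{k ≥ i} g_k`, so `lim G = lim¹ G = 0`.

The map `t` comes from `H = v ∘ d_B⁻¹ ∘ u : ∏ A → ∏ C`, well defined because `u` sends every
family into the image of `d_B` and `v` kills the threads of `B`. It satisfies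
`H ∘ d_A = f = d_C ∘ H`, and a partial thread of `B` extends to a thread, so `(H z)_i` only
depends on the `z_j` with `j ≥ i`. Hence `t_i [z] = (H z)_i` is well defined.
-/

open Finset

namespace AddMonoidHom

variable {X W Y Z : Type*} [AddCommGroup X] [AddCommGroup W] [AddCommGroup Y] [AddCommGroup Z]

/-- The composite `V ∘ d⁻¹ ∘ U` along `X →U Y ←d W →V Z`. -/
noncomputable def zigzag (U : X →+ Y) (d : W →+ Y) (V : W →+ Z) (hU : U.range ≤ d.range)
    (hV : d.ker ≤ V.ker) : X →+ Z :=
  (QuotientAddGroup.lift d.ker V hV).comp <|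
    (QuotientAddGroup.quotientKerEquivRange d).symm.toAddMonoidHom.comp <|
      U.codRestrict d.range fun x => hU ⟨x, rfl⟩

lemma zigzag_apply_of_eq {U : X →+ Y} {d : W →+ Y} {V : W →+ Z} (hU : U.range ≤ d.range)
    (hV : d.ker ≤ V.ker) {x : X} {w : W} (h : U x = d w) : zigzag U d V hU hV x = V w := by
  have hw : U.codRestrict d.range (fun x => hU ⟨x, rfl⟩) x =
      QuotientAddGroup.quotientKerEquivRange d (w : W ⧸ d.ker) := Subtype.ext h
  simp only [zigzag, coe_comp, Function.comp_apply, hw, AddEquiv.coe_toAddMonoidHom,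
    AddEquiv.symm_apply_apply, QuotientAddGroup.lift_mk]

end AddMonoidHom

namespace Tower

section Diff

variable {A B : ℕ → Type*} [∀ i, AddCommGroup (A i)] [∀ i, AddCommGroup (B i)]

/-- The map whose kernel is `lim` and whose cokernel is `lim¹`. -/
def diff (α : ∀ i, A (i + 1) →+ A i) : (∀ i, A i) →+ (∀ i, A i) where
  toFun y i := y i - α i (y (i + 1))
  map_zero' := by ext; simp
  map_add' y z := by ext; simp only [Pi.add_apply, map_add]; abel

@[simp] lemma diff_apply (α : ∀ i, A (i + 1) →+ A i) (y : ∀ i, A i) (i : ℕ) :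
    diff α y i = y i - α i (y (i + 1)) := rfl

lemma mem_ker_diff {α : ∀ i, A (i + 1) →+ A i} {y : ∀ i, A i} :
    y ∈ (diff α).ker ↔ ∀ i, α i (y (i + 1)) = y i := by
  simp only [AddMonoidHom.mem_ker, funext_iff, diff_apply, Pi.zero_apply, sub_eq_zero]
  exact forall_congr' fun _ => eq_comm

lemma piMap_diff {α : ∀ i, A (i + 1) →+ A i} {β : ∀ i, B (i + 1) →+ B i} {u : ∀ i, A i →+ B i}
    (hu : ∀ i a, u i (α i a) = β i (u (i + 1) a)) (y : ∀ i, A i) :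
    AddMonoidHom.piMap u (diff α y) = diff β (AddMonoidHom.piMap u y) := by
  ext i
  simp [hu]

lemma exists_mem_ker_diff_eq_of_ge {β : ∀ i, B (i + 1) →+ B i} (n : ℕ) {b : ∀ i, B i}
    (hb : ∀ i, n ≤ i → β i (b (i + 1)) = b i) : ∃ w ∈ (diff β).ker, ∀ i, n ≤ i → w i = b i := by
  induction n generalizing b with
  | zero => exact ⟨b, mem_ker_diff.2 fun i => hb i i.zero_le, fun _ _ => rfl⟩
  | succ n ih =>
    have hb' : ∀ i, n ≤ i → β i (Function.update b n (β n (b (n + 1))) (i + 1)) =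
        Function.update b n (β n (b (n + 1))) i := fun i hi => by
      rcases hi.eq_or_lt with rfl | hi
      · simp
      · rw [Function.update_of_ne (by omega), Function.update_of_ne (by omega), hb i hi]
    obtain ⟨w, hw, hwb⟩ := ih hb'
    exact ⟨w, hw, fun i hi => (hwb i (by omega)).trans (Function.update_of_ne (by omega) _ _)⟩

end Diff

section TailQuot

variable {A : ℕ → Type*} [∀ i, AddCommGroup (A i)]

def truncBelow (i : ℕ) : (∀ j, A j) →+ (∀ j, A j) where
  toFun z j := if i ≤ j then z j else 0
  map_zero' := by ext; simp
  map_add' z w := by ext j; dsimp only [Pi.add_apply]; split_ifs <;> simp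

lemma truncBelow_apply_of_le {i j : ℕ} (h : i ≤ j) (z : ∀ j, A j) : truncBelow i z j = z j :=
  if_pos h

lemma truncBelow_apply_of_lt {i j : ℕ} (h : j < i) (z : ∀ j, A j) : truncBelow i z j = 0 :=
  if_neg (by omega)

lemma truncBelow_eq_self {i : ℕ} {z : ∀ j, A j} (h : ∀ j < i, z j = 0) : truncBelow i z = z := by
  ext j
  rcases lt_or_ge j i with hj | hj
  · rw [truncBelow_apply_of_lt hj, h j hj]
  · exact truncBelow_apply_of_le hj z

lemma truncBelow_truncBelow_of_le {i k : ℕ} (h : i ≤ k) (z : ∀ j, A j) :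
    truncBelow i (truncBelow k z) = truncBelow k z :=
  truncBelow_eq_self fun _ hj => truncBelow_apply_of_lt (by omega) z

def vanishingUpTo (i : ℕ) : AddSubgroup (∀ j, A j) :=
  AddSubgroup.pi {j | j ≤ i} fun _ => ⊥

lemma mem_vanishingUpTo {i : ℕ} {y : ∀ j, A j} : y ∈ vanishingUpTo i ↔ ∀ j ≤ i, y j = 0 := by
  simp [vanishingUpTo, AddSubgroup.mem_pi]

variable (α : ∀ i, A (i + 1) →+ A i)

def relations (i : ℕ) : AddSubgroup (∀ j, A j) :=
  ((vanishingUpTo i).map (diff α)).comap (truncBelow i)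

/-- `TailQuot α i` models `∏_{j ≥ i} A j ⧸ d (∏_{j > i} A j)`: the coordinates below `i` are
carried along but all lie in the relations. -/
abbrev TailQuot (i : ℕ) : Type _ := (∀ j, A j) ⧸ relations α i

lemma diff_mem_relations {i : ℕ} {y : ∀ j, A j} (hy : y ∈ vanishingUpTo i) :
    diff α y ∈ relations α i := by
  rw [mem_vanishingUpTo] at hy
  refine ⟨y, mem_vanishingUpTo.2 hy, (truncBelow_eq_self fun j hj => ?_).symm⟩
  simp [hy j hj.le, hy (j + 1) hj]

lemma mk_truncBelow (i : ℕ) (z : ∀ j, A j) :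
    (truncBelow i z : TailQuot α i) = z := by
  refine QuotientAddGroup.eq_iff_sub_mem.2 ⟨0, zero_mem _, ?_⟩
  rw [map_zero, map_sub, truncBelow_truncBelow_of_le le_rfl, sub_self]

def bond (i : ℕ) : TailQuot α (i + 1) →+ TailQuot α i :=
  QuotientAddGroup.map _ _ (truncBelow (i + 1)) fun z ⟨y, hy, hyz⟩ =>
    ⟨y, mem_vanishingUpTo.2 fun j hj => mem_vanishingUpTo.1 hy j (by omega),
      by rw [hyz, truncBelow_truncBelow_of_le (Nat.le_succ i)]⟩

lemma bond_mk (i : ℕ) (z : ∀ j, A j) :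
    bond α i (z : TailQuot α (i + 1)) = (truncBelow (i + 1) z : TailQuot α i) := rfl

def incl (i : ℕ) : A i →+ TailQuot α i :=
  (QuotientAddGroup.mk' _).comp (AddMonoidHom.single A i)

lemma incl_apply (i : ℕ) (a : A i) : incl α i a = (Pi.single i a : TailQuot α i) := rfl

lemma diff_single_succ (i : ℕ) (a : A (i + 1)) :
    diff α (Pi.single (i + 1) a) = Pi.single (i + 1) a - Pi.single i (α i a) := by
  ext j
  rcases eq_or_ne j i with rfl | hi
  · simp
  rcases eq_or_ne j (i + 1) with rfl | hi'
  · simp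
  simp [Pi.single_eq_of_ne hi, Pi.single_eq_of_ne hi',
    Pi.single_eq_of_ne (by omega : j + 1 ≠ i + 1)]

lemma incl_comm (i : ℕ) (a : A (i + 1)) : incl α i (α i a) = bond α i (incl α (i + 1) a) := by
  have hy : Pi.single (i + 1) a ∈ vanishingUpTo (A := A) i :=
    mem_vanishingUpTo.2 fun j hj => Pi.single_eq_of_ne (by omega) a
  rw [incl_apply, incl_apply, bond_mk, truncBelow_eq_self fun j hj => Pi.single_eq_of_ne hj.ne a,
    eq_comm, QuotientAddGroup.eq_iff_sub_mem, ← diff_single_succ]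
  exact diff_mem_relations α hy

/-- `∑_{k ≥ i} w k`, coordinatewise finite as long as each `w k` vanishes below `k`. -/
def tailSum (w : ℕ → ∀ j, A j) (i : ℕ) : ∀ j, A j := fun j => ∑ k ∈ Ico i (j + 1), w k j

lemma tailSum_apply_of_lt (w : ℕ → ∀ j, A j) {i j : ℕ} (h : j < i) : tailSum w i j = 0 := by
  simp [tailSum, Ico_eq_empty_of_le (by omega : i ≥ j + 1)]

lemma tailSum_eq_add_succ {w : ℕ → ∀ j, A j} (hw : ∀ k, ∀ j < k, w k j = 0) (i : ℕ) :
    tailSum w i = w i + tailSum w (i + 1) := by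
  ext j
  rcases lt_or_ge j i with hj | hj
  · simp [tailSum_apply_of_lt w hj, tailSum_apply_of_lt w (Nat.lt_succ_of_lt hj), hw i j hj]
  · simp [tailSum, sum_eq_sum_Ico_succ_bot (Nat.lt_succ_of_le hj)]

lemma tailSum_sub_succ {x : ℕ → ∀ j, A j} (hx : ∀ k, ∀ j < k, x k j = 0) (i : ℕ) :
    tailSum (fun k => x k - x (k + 1)) i = x i := by
  ext j
  rcases lt_or_ge j i with hj | hj
  · rw [tailSum_apply_of_lt _ hj, hx i j hj]
  · have := sum_Ico_sub (fun k => -x k j) (Nat.le_succ_of_le hj)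
    simp only [neg_sub_neg, hx (j + 1) j (Nat.lt_succ_self j), neg_zero] at this
    simpa [tailSum] using this

lemma diff_tailSum {y : ℕ → ∀ j, A j} (hy : ∀ k, y k k = 0) (i : ℕ) :
    diff α (tailSum y i) = tailSum (fun k => diff α (y k)) i := by
  ext j
  simp only [diff_apply, tailSum, map_sum, sum_sub_distrib, sub_right_inj]
  rcases le_or_gt i (j + 1) with hj | hj
  · rw [sum_Ico_succ_top hj, hy, map_zero, add_zero]
  · rw [Ico_eq_empty_of_le (by omega : i ≥ j + 1 + 1), Ico_eq_empty_of_le (by omega : i ≥ j + 1)]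

lemma tailSum_mem_vanishingUpTo {y : ℕ → ∀ j, A j} (hy : ∀ k, ∀ j ≤ k, y k j = 0) (i : ℕ) :
    tailSum y i ∈ vanishingUpTo i :=
  mem_vanishingUpTo.2 fun j hj => sum_eq_zero fun k hk => hy k j (by simp at hk; omega)

lemma eq_zero_of_bond_eq (g : ∀ i, TailQuot α i) (hg : ∀ i, bond α i (g (i + 1)) = g i) (i : ℕ) :
    g i = 0 := by
  choose z hz using fun i => QuotientAddGroup.mk_surjective (g i)
  set x : ℕ → ∀ j, A j := fun k => truncBelow k (z k)
  have hx : ∀ k, ∀ j < k, x k j = 0 := fun k j hj => truncBelow_apply_of_lt hj _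
  have hxg : ∀ k, (x k : TailQuot α k) = g k := fun k => (mk_truncBelow α k _).trans (hz k)
  have hrel : ∀ k, x k - x (k + 1) ∈ relations α k := fun k => by
    rw [← QuotientAddGroup.eq_iff_sub_mem, hxg, ← hg, ← hxg, bond_mk]
    exact congrArg _ (truncBelow_truncBelow_of_le le_rfl _)
  choose y hy hdy using hrel
  have hdy' : ∀ k, diff α (y k) = x k - x (k + 1) := fun k => by
    rw [hdy, truncBelow_eq_self fun j hj => by simp [hx k j hj, hx (k + 1) j (by omega)]]
  have hyv : ∀ k, ∀ j ≤ k, y k j = 0 := fun k => mem_vanishingUpTo.1 (hy k)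
  have hxi : x i = diff α (tailSum y i) := by
    rw [diff_tailSum α (fun k => hyv k k le_rfl), ← tailSum_sub_succ hx i]
    simp only [hdy']
  rw [← hxg, QuotientAddGroup.eq_zero_iff, hxi]
  exact diff_mem_relations α (tailSum_mem_vanishingUpTo hyv i)

lemma exists_sub_bond_eq (g : ∀ i, TailQuot α i) :
    ∃ c : ∀ i, TailQuot α i, ∀ i, c i - bond α i (c (i + 1)) = g i := by
  choose z hz using fun i => QuotientAddGroup.mk_surjective (g i)
  set w : ℕ → ∀ j, A j := fun k => truncBelow k (z k)
  have hw : ∀ k, ∀ j < k, w k j = 0 := fun k j hj => truncBelow_apply_of_lt hj _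
  refine ⟨fun i => (tailSum w i : TailQuot α i), fun i => ?_⟩
  rw [bond_mk, truncBelow_eq_self fun j hj => tailSum_apply_of_lt w hj, ← QuotientAddGroup.mk_sub,
    tailSum_eq_add_succ hw, add_sub_cancel_right, mk_truncBelow, hz]

end TailQuot

section Desc

variable {A C : ℕ → Type*} [∀ i, AddCommGroup (A i)] [∀ i, AddCommGroup (C i)]
  (α : ∀ i, A (i + 1) →+ A i) {γ : ∀ i, C (i + 1) →+ C i} {f : ∀ i, A i →+ C i}
  {H : (∀ i, A i) →+ (∀ i, C i)}

def desc (hHd : ∀ y, H (diff α y) = AddMonoidHom.piMap f y)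
    (hHt : ∀ i z, H (truncBelow i z) i = H z i) (i : ℕ) : TailQuot α i →+ C i :=
  QuotientAddGroup.lift _ ((Pi.evalAddMonoidHom C i).comp H) fun z ⟨y, hy, hyz⟩ => by
    simp only [AddMonoidHom.mem_ker, AddMonoidHom.comp_apply, Pi.evalAddMonoidHom_apply]
    rw [← hHt, ← hyz, hHd, AddMonoidHom.piMap_apply, mem_vanishingUpTo.1 hy i le_rfl, map_zero]

variable (hHd : ∀ y, H (diff α y) = AddMonoidHom.piMap f y)
  (hHt : ∀ i z, H (truncBelow i z) i = H z i) (hdH : ∀ a, diff γ (H a) = AddMonoidHom.piMap f a)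
include hdH

lemma desc_bond (i : ℕ) (g : TailQuot α (i + 1)) :
    desc α hHd hHt i (bond α i g) = γ i (desc α hHd hHt (i + 1) g) := by
  induction g using QuotientAddGroup.induction_on with | H z => ?_
  have := congrFun (hdH (truncBelow (i + 1) z)) i
  rwa [diff_apply, AddMonoidHom.piMap_apply, truncBelow_apply_of_lt (Nat.lt_succ_self i), map_zero,
    sub_eq_zero, hHt] at this

lemma desc_incl (i : ℕ) (a : A i) : desc α hHd hHt i (incl α i a) = f i a := by
  have htrunc : truncBelow (i + 1) (Pi.single i a) = 0 := by
    ext j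
    rcases lt_or_ge j (i + 1) with hj | hj
    · exact truncBelow_apply_of_lt hj _
    · rw [truncBelow_apply_of_le hj, Pi.single_eq_of_ne (by omega), Pi.zero_apply]
  have := congrFun (hdH (Pi.single i a)) i
  rwa [diff_apply, AddMonoidHom.piMap_apply, Pi.single_eq_same, ← hHt (i + 1), htrunc, map_zero,
    Pi.zero_apply, map_zero, sub_zero] at this

end Desc

section Zigzag

open AddMonoidHom

variable {A B C : ℕ → Type*} [∀ i, AddCommGroup (A i)] [∀ i, AddCommGroup (B i)]
  [∀ i, AddCommGroup (C i)] {α : ∀ i, A (i + 1) →+ A i} {β : ∀ i, B (i + 1) →+ B i}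
  {γ : ∀ i, C (i + 1) →+ C i} {f : ∀ i, A i →+ C i} {u : ∀ i, A i →+ B i} {v : ∀ i, B i →+ C i}
  (hU : (piMap u).range ≤ (diff β).range) (hV : (diff β).ker ≤ (piMap v).ker)

lemma zigzag_diff (hu : ∀ i a, u i (α i a) = β i (u (i + 1) a))
    (huv : ∀ i a, v i (u i a) = f i a) (y : ∀ i, A i) :
    zigzag (piMap u) (diff β) (piMap v) hU hV (diff α y) = piMap f y := by
  rw [zigzag_apply_of_eq hU hV (piMap_diff hu y)]
  ext i
  exact huv i (y i)

lemma diff_zigzag (hv : ∀ i b, v i (β i b) = γ i (v (i + 1) b))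
    (huv : ∀ i a, v i (u i a) = f i a) (a : ∀ i, A i) :
    diff γ (zigzag (piMap u) (diff β) (piMap v) hU hV a) = piMap f a := by
  obtain ⟨b, hb⟩ := hU ⟨a, rfl⟩
  rw [zigzag_apply_of_eq hU hV hb.symm, ← piMap_diff hv, hb]
  ext i
  exact huv i (a i)

lemma zigzag_truncBelow_apply (i : ℕ) (z : ∀ j, A j) :
    zigzag (piMap u) (diff β) (piMap v) hU hV (truncBelow i z) i =
      zigzag (piMap u) (diff β) (piMap v) hU hV z i := by
  obtain ⟨b, hb⟩ := hU ⟨z - truncBelow i z, rfl⟩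
  have hthread : ∀ j, i ≤ j → β j (b (j + 1)) = b j := fun j hj => by
    have := congrFun hb j
    rw [diff_apply, piMap_apply, Pi.sub_apply, truncBelow_apply_of_le hj, sub_self, map_zero]
      at this
    exact (sub_eq_zero.1 this).symm
  obtain ⟨w, hw, hwb⟩ := exists_mem_ker_diff_eq_of_ge i hthread
  have hz : zigzag (piMap u) (diff β) (piMap v) hU hV (z - truncBelow i z) i = 0 := by
    rw [zigzag_apply_of_eq hU hV hb.symm, piMap_apply, ← hwb i le_rfl]
    exact congrFun (hV hw) i
  rwa [map_sub, Pi.sub_apply, sub_eq_zero, eq_comm] at hz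

end Zigzag

end Tower

theorem stmt_5_general (A B C : ℕ → Type) [∀ i, AddCommGroup (A i)] [∀ i, AddCommGroup (B i)]
    [∀ i, AddCommGroup (C i)]
    (α : ∀ i, A (i + 1) →+ A i) (β : ∀ i, B (i + 1) →+ B i) (γ : ∀ i, C (i + 1) →+ C i)
    (f : ∀ i, A i →+ C i) (u : ∀ i, A i →+ B i) (v : ∀ i, B i →+ C i)
    (hu : ∀ i a, u i (α i a) = β i (u (i + 1) a))
    (hv : ∀ i b, v i (β i b) = γ i (v (i + 1) b))
    (huv : ∀ i a, v i (u i a) = f i a)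
    (h1 : ∀ a : ∀ i, A i, ∃ b : ∀ i, B i, ∀ i, u i (a i) = b i - β i (b (i + 1)))
    (h2 : ∀ b : ∀ i, B i, (∀ i, β i (b (i + 1)) = b i) → ∀ i, v i (b i) = 0) :
    ∃ (G : ℕ → AddCommGrpCat) (δ : ∀ i, ↥(G (i + 1)) →+ ↥(G i))
      (s : ∀ i, A i →+ ↥(G i)) (t : ∀ i, ↥(G i) →+ C i),
      (∀ i a, s i (α i a) = δ i (s (i + 1) a)) ∧
      (∀ i g, t i (δ i g) = γ i (t (i + 1) g)) ∧
      (∀ i a, t i (s i a) = f i a) ∧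
      (∀ g : ∀ i, ↥(G i), (∀ i, δ i (g (i + 1)) = g i) → ∀ i, g i = 0) ∧
      (∀ g : ∀ i, ↥(G i), ∃ c : ∀ i, ↥(G i), ∀ i, c i - δ i (c (i + 1)) = g i) := by
  have hU : (AddMonoidHom.piMap u).range ≤ (Tower.diff β).range := by
    rintro _ ⟨a, rfl⟩
    obtain ⟨b, hb⟩ := h1 a
    exact ⟨b, funext fun i => (hb i).symm⟩
  have hV : (Tower.diff β).ker ≤ (AddMonoidHom.piMap v).ker :=
    fun b hb => funext (h2 b (Tower.mem_ker_diff.1 hb))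
  have hHd := Tower.zigzag_diff hU hV hu huv
  have hHt := Tower.zigzag_truncBelow_apply hU hV
  have hdH := Tower.diff_zigzag hU hV hv huv
  -- `G` may live in any universe.
  let e (i : ℕ) : ULift (Tower.TailQuot α i) ≃+ Tower.TailQuot α i := AddEquiv.ulift
  refine ⟨fun i => AddCommGrpCat.of (ULift (Tower.TailQuot α i)),
    fun i => (e i).symm.toAddMonoidHom.comp ((Tower.bond α i).comp (e (i + 1)).toAddMonoidHom),
    fun i => (e i).symm.toAddMonoidHom.comp (Tower.incl α i),
    fun i => (Tower.desc α hHd hHt i).comp (e i).toAddMonoidHom,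
    fun i a => congrArg ULift.up (Tower.incl_comm α i a),
    fun i g => Tower.desc_bond α hHd hHt hdH i g.down,
    fun i a => Tower.desc_incl α hHd hHt hdH i a,
    fun g hg i => congrArg ULift.up
      (Tower.eq_zero_of_bond_eq α (fun i => (g i).down) (fun i => congrArg ULift.down (hg i)) i),
    fun g => ?_⟩
  obtain ⟨c, hc⟩ := Tower.exists_sub_bond_eq α fun i => (g i).down
  exact ⟨fun i => ULift.up (c i), fun i => congrArg ULift.up (hc i)⟩

/-- Theorem B: if a level morphism `f : (A_i) → (C_i)` of towers of abelian groups
factors through a tower `(B_i)` in such a way that the induced map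
`lim¹ A_i → lim¹ B_i` is zero and the induced map `lim B_i → lim C_i` is zero,
then `f` factors through a tower of abelian groups `(G_i)` with `lim G_i = 0`
and `lim¹ G_i = 0`.

Here `lim` is the group of threads; `lim¹` is the cokernel of
`d(g)_i = g_i − p_i(g_{i+1})`, so "`lim¹ A → lim¹ B` is zero" says that the image of
any family `a : ∏ A_i` lies in the range of `d_B`, "`lim G = 0`" says every thread of
`G` is zero, and "`lim¹ G = 0`" says `d_G` is surjective. -/
theorem stmt_5 (A B C : ℕ → Type) [∀ i, AddCommGroup (A i)] [∀ i, AddCommGroup (B i)]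
    [∀ i, AddCommGroup (C i)]
    (α : ∀ i, A (i + 1) →+ A i) (β : ∀ i, B (i + 1) →+ B i) (γ : ∀ i, C (i + 1) →+ C i)
    (f : ∀ i, A i →+ C i) (u : ∀ i, A i →+ B i) (v : ∀ i, B i →+ C i)
    (hf : ∀ i a, f i (α i a) = γ i (f (i + 1) a))
    (hu : ∀ i a, u i (α i a) = β i (u (i + 1) a))
    (hv : ∀ i b, v i (β i b) = γ i (v (i + 1) b))
    (huv : ∀ i a, v i (u i a) = f i a)
    (h1 : ∀ a : ∀ i, A i, ∃ b : ∀ i, B i, ∀ i, u i (a i) = b i - β i (b (i + 1)))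
    (h2 : ∀ b : ∀ i, B i, (∀ i, β i (b (i + 1)) = b i) → ∀ i, v i (b i) = 0) :
    ∃ (G : ℕ → AddCommGrpCat) (δ : ∀ i, ↥(G (i + 1)) →+ ↥(G i))
      (s : ∀ i, A i →+ ↥(G i)) (t : ∀ i, ↥(G i) →+ C i),
      (∀ i a, s i (α i a) = δ i (s (i + 1) a)) ∧
      (∀ i g, t i (δ i g) = γ i (t (i + 1) g)) ∧
      (∀ i a, t i (s i a) = f i a) ∧
      (∀ g : ∀ i, ↥(G i), (∀ i, δ i (g (i + 1)) = g i) → ∀ i, g i = 0) ∧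
      (∀ g : ∀ i, ↥(G i), ∃ c : ∀ i, ↥(G i), ∀ i, c i - δ i (c (i + 1)) = g i) :=
  stmt_5_general A B C α β γ f u v hu hv huv h1 h2
end

section
/- Let f = (f_i : A_i → C_i) be a level morphism between towers of abelian groups (A_i, α_i) and (C_i, γ_i). Then there exist a tower of abelian groups (B_i, β_i) and level morphisms s = (s_i : A_i → B_i) and t = (t_i : B_i → C_i) with t_i ∘ s_i = f_i for all i, such that each s_i is surjective (so each B_i is a quotient of A_i), the induced homomorphism lim_i A_i → lim_i B_i is surjective, the induced homomorphism lim_i B_i → lim_i C_i is injective, and the induced homomorphism lim¹_i A_i → lim¹_i B_i is an isomorphism. -/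
/-!
Let `K i ⊆ A i` be the image of `lim ker f → A i` and `B i = A i ⧸ K i`. The bonding maps
`K (i + 1) → K i` are surjective, so `lim¹ K = 0`: `k = d e` can be solved one coordinate at a
time. Through `0 → K → A → B → 0` this makes `lim A → lim B` surjective and `lim¹ A → lim¹ B`
injective. A thread of `B` killed in `C` lifts to a thread of `A` in `ker f`, whose coordinates
lie in `K` by construction, so `lim B → lim C` is injective.
-/

theorem exists_seq_of_forall_exists_succ {X : ℕ → Type*} (P : ∀ i, X i → Prop)
    (R : ∀ i, X (i + 1) → X i → Prop) {x₀ : X 0} (h₀ : P 0 x₀)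
    (step : ∀ i x, P i x → ∃ y, P (i + 1) y ∧ R i y x) :
    ∃ x : ∀ i, X i, (∀ i, P i (x i)) ∧ ∀ i, R i (x (i + 1)) (x i) := by
  choose next hnextP hnextR using step
  let x : ∀ i, {y : X i // P i y} :=
    fun i => Nat.rec ⟨x₀, h₀⟩ (fun i y => ⟨next i y.1 y.2, hnextP i y.1 y.2⟩) i
  exact ⟨fun i => (x i).1, fun i => (x i).2, fun i => hnextR i (x i).1 (x i).2⟩

namespace Tower

variable {A B C : ℕ → Type*} [∀ i, AddCommGroup (A i)] [∀ i, AddCommGroup (B i)]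
  [∀ i, AddCommGroup (C i)] {α : ∀ i, A (i + 1) →+ A i} {β : ∀ i, B (i + 1) →+ B i}
  {γ : ∀ i, C (i + 1) →+ C i}

/-- `lim¹` of a subtower with surjective bonding maps vanishes. -/
theorem exists_eq_sub_of_map_eq {K : ∀ i, AddSubgroup (A i)}
    (hK : ∀ i, (K (i + 1)).map (α i) = K i) (k : ∀ i, A i) (hk : ∀ i, k i ∈ K i) :
    ∃ e : ∀ i, A i, (∀ i, e i ∈ K i) ∧ ∀ i, k i = e i - α i (e (i + 1)) := by
  obtain ⟨e, he, hstep⟩ := exists_seq_of_forall_exists_succ (fun i e => e ∈ K i)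
    (fun i y x => α i y = x - k i) (zero_mem (K 0)) fun i x hx => by
      simpa only [← hK i, AddSubgroup.mem_map] using sub_mem hx (hk i)
  exact ⟨e, he, fun i => by rw [hstep i, sub_sub_cancel]⟩

section Surjective

variable (q : ∀ i, A i →+ B i) (hq : ∀ i a, q i (α i a) = β i (q (i + 1) a))
  (hq_surj : ∀ i, Function.Surjective (q i))
  (hker : ∀ i, (q (i + 1)).ker.map (α i) = (q i).ker)
include hq hq_surj hker

theorem exists_thread_lift (b : ∀ i, B i) (hb : ∀ i, β i (b (i + 1)) = b i) :
    ∃ a : ∀ i, A i, (∀ i, α i (a (i + 1)) = a i) ∧ ∀ i, q i (a i) = b i := by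
  choose x hx using fun i => hq_surj i (b i)
  have hdx : ∀ i, x i - α i (x (i + 1)) ∈ (q i).ker := fun i => by
    rw [AddMonoidHom.mem_ker, map_sub, hq, hx, hx, hb, sub_self]
  obtain ⟨e, he, hde⟩ := exists_eq_sub_of_map_eq hker _ hdx
  refine ⟨x - e, fun i => ?_, fun i => ?_⟩
  · simp only [Pi.sub_apply, map_sub]
    linear_combination (norm := abel) -hde i
  · rw [Pi.sub_apply, map_sub, hx, (he i : q i (e i) = 0), sub_zero]

theorem exists_eq_sub_of_map_eq_sub (a : ∀ i, A i)
    (ha : ∃ c : ∀ i, B i, ∀ i, q i (a i) = c i - β i (c (i + 1))) :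
    ∃ e : ∀ i, A i, ∀ i, a i = e i - α i (e (i + 1)) := by
  obtain ⟨c, hc⟩ := ha
  choose x hx using fun i => hq_surj i (c i)
  have hk : ∀ i, a i - (x i - α i (x (i + 1))) ∈ (q i).ker := fun i => by
    rw [AddMonoidHom.mem_ker, map_sub, map_sub, hq, hx, hx, hc, sub_self]
  obtain ⟨e, -, hde⟩ := exists_eq_sub_of_map_eq hker _ hk
  exact ⟨x + e, fun i => by
    simp only [Pi.add_apply, map_add]
    linear_combination (norm := abel) hde i⟩

theorem thread_eq_of_map_eq (t : ∀ i, B i →+ C i) (f : ∀ i, A i →+ C i)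
    (htq : ∀ i a, t i (q i a) = f i a)
    (hf_ker : ∀ a : ∀ i, A i, (∀ i, α i (a (i + 1)) = a i) → (∀ i, f i (a i) = 0) →
      ∀ i, q i (a i) = 0)
    (b b' : ∀ i, B i) (hb : ∀ i, β i (b (i + 1)) = b i) (hb' : ∀ i, β i (b' (i + 1)) = b' i)
    (hbb' : ∀ i, t i (b i) = t i (b' i)) : b = b' := by
  obtain ⟨a, ha, hab⟩ := exists_thread_lift q hq hq_surj hker (b - b') fun i => by
    simp only [Pi.sub_apply, map_sub, hb, hb']
  have hfa : ∀ i, f i (a i) = 0 := fun i => by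
    rw [← htq, hab, Pi.sub_apply, map_sub, hbb', sub_self]
  funext i
  rw [← sub_eq_zero, ← Pi.sub_apply, ← hab, hf_ker a ha hfa]

end Surjective

theorem map_comm_of_surjective {q : ∀ i, A i →+ B i} (hq : ∀ i a, q i (α i a) = β i (q (i + 1) a))
    (hq_surj : ∀ i, Function.Surjective (q i)) {t : ∀ i, B i →+ C i} {f : ∀ i, A i →+ C i}
    (hf : ∀ i a, f i (α i a) = γ i (f (i + 1) a)) (htq : ∀ i a, t i (q i a) = f i a) (i : ℕ)
    (b : B (i + 1)) : t i (β i b) = γ i (t (i + 1) b) := by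
  obtain ⟨a, rfl⟩ := hq_surj (i + 1) b
  rw [← hq, htq, htq, hf]

variable (α) in
def kerThreads (f : ∀ i, A i →+ C i) : AddSubgroup (∀ i, A i) where
  carrier := {x | (∀ i, α i (x (i + 1)) = x i) ∧ ∀ i, f i (x i) = 0}
  zero_mem' := ⟨fun i => map_zero _, fun i => map_zero _⟩
  add_mem' hx hy := ⟨fun i => by simp [hx.1 i, hy.1 i], fun i => by simp [hx.2 i, hy.2 i]⟩
  neg_mem' hx := ⟨fun i => by simp [hx.1 i], fun i => by simp [hx.2 i]⟩

variable (α) in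
def kerThreadsImage (f : ∀ i, A i →+ C i) (i : ℕ) : AddSubgroup (A i) :=
  (kerThreads α f).map (Pi.evalAddMonoidHom A i)

theorem map_kerThreadsImage (f : ∀ i, A i →+ C i) (i : ℕ) :
    (kerThreadsImage α f (i + 1)).map (α i) = kerThreadsImage α f i := by
  ext a
  constructor
  · rintro ⟨_, ⟨x, hx, rfl⟩, rfl⟩
    exact ⟨x, hx, (hx.1 i).symm⟩
  · rintro ⟨x, hx, rfl⟩
    exact ⟨x (i + 1), ⟨x, hx, rfl⟩, hx.1 i⟩

theorem kerThreadsImage_le_ker (f : ∀ i, A i →+ C i) (i : ℕ) :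
    kerThreadsImage α f i ≤ (f i).ker := by
  rintro _ ⟨x, hx, rfl⟩
  exact hx.2 i

theorem mem_kerThreadsImage {f : ∀ i, A i →+ C i} {x : ∀ i, A i}
    (hx : ∀ i, α i (x (i + 1)) = x i) (hfx : ∀ i, f i (x i) = 0) (i : ℕ) :
    x i ∈ kerThreadsImage α f i :=
  ⟨x, ⟨hx, hfx⟩, rfl⟩

end Tower

open Tower

/-- Lemma (level-factorization (a)): any level morphism `f : (A_i) → (C_i)` of towers
of abelian groups factors through a tower `(B_i)` of quotient groups of the `A_i`
(i.e. with each `A_i → B_i` surjective) such that `lim A_i → lim B_i` is surjective,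
`lim B_i → lim C_i` is injective, and `lim¹ A_i → lim¹ B_i` is an isomorphism.

Here `lim` is the group of threads and `lim¹` is the cokernel of
`d(g)_i = g_i − p_i(g_{i+1})`; the conditions on `lim¹` are expressed on
representatives: injectivity says that if the image of `a : ∏ A_i` lies in the range
of `d_B` then `a` lies in the range of `d_A`, and surjectivity says that every
`b : ∏ B_i` agrees with the image of some `a : ∏ A_i` modulo the range of `d_B`. -/
theorem stmt_6 (A C : ℕ → Type) [∀ i, AddCommGroup (A i)] [∀ i, AddCommGroup (C i)]
    (α : ∀ i, A (i + 1) →+ A i) (γ : ∀ i, C (i + 1) →+ C i)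
    (f : ∀ i, A i →+ C i)
    (hf : ∀ i a, f i (α i a) = γ i (f (i + 1) a)) :
    ∃ (B : ℕ → AddCommGrpCat) (β : ∀ i, ↥(B (i + 1)) →+ ↥(B i))
      (s : ∀ i, A i →+ ↥(B i)) (t : ∀ i, ↥(B i) →+ C i),
      (∀ i a, s i (α i a) = β i (s (i + 1) a)) ∧
      (∀ i b, t i (β i b) = γ i (t (i + 1) b)) ∧
      (∀ i a, t i (s i a) = f i a) ∧
      (∀ i, Function.Surjective (s i)) ∧
      -- `lim A → lim B` is surjective
      (∀ b : ∀ i, ↥(B i), (∀ i, β i (b (i + 1)) = b i) →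
        ∃ a : ∀ i, A i, (∀ i, α i (a (i + 1)) = a i) ∧ ∀ i, s i (a i) = b i) ∧
      -- `lim B → lim C` is injective
      (∀ b b' : ∀ i, ↥(B i), (∀ i, β i (b (i + 1)) = b i) →
        (∀ i, β i (b' (i + 1)) = b' i) → (∀ i, t i (b i) = t i (b' i)) → b = b') ∧
      -- `lim¹ A → lim¹ B` is injective
      (∀ a : ∀ i, A i, (∃ c : ∀ i, ↥(B i), ∀ i, s i (a i) = c i - β i (c (i + 1))) →
        ∃ e : ∀ i, A i, ∀ i, a i = e i - α i (e (i + 1))) ∧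
      -- `lim¹ A → lim¹ B` is surjective
      (∀ b : ∀ i, ↥(B i), ∃ a : ∀ i, A i, ∃ c : ∀ i, ↥(B i),
        ∀ i, s i (a i) - b i = c i - β i (c (i + 1))) := by
  let K := kerThreadsImage α f
  -- `AddCommGrpCat` in the statement is universe polymorphic, hence the `ULift`.
  let up : ∀ i, A i ⧸ K i →+ ULift (A i ⧸ K i) := fun _ => AddEquiv.ulift.symm.toAddMonoidHom
  let down : ∀ i, ULift (A i ⧸ K i) →+ A i ⧸ K i := fun _ => AddEquiv.ulift.toAddMonoidHom
  let q : ∀ i, A i →+ ULift (A i ⧸ K i) := fun i => (up i).comp (QuotientAddGroup.mk' (K i))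
  let β : ∀ i, ULift (A (i + 1) ⧸ K (i + 1)) →+ ULift (A i ⧸ K i) := fun i =>
    (up i).comp ((QuotientAddGroup.map _ _ (α i)
      (AddSubgroup.map_le_iff_le_comap.mp (map_kerThreadsImage f i).le)).comp (down (i + 1)))
  let t : ∀ i, ULift (A i ⧸ K i) →+ C i := fun i =>
    (QuotientAddGroup.lift (K i) (f i) (kerThreadsImage_le_ker f i)).comp (down i)
  have hq : ∀ i a, q i (α i a) = β i (q (i + 1) a) := fun _ _ => rfl
  have htq : ∀ i a, t i (q i a) = f i a := fun _ _ => rfl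
  have hq_surj : ∀ i, Function.Surjective (q i) := fun i =>
    AddEquiv.ulift.symm.surjective.comp (QuotientAddGroup.mk'_surjective (K i))
  have hq_ker : ∀ i, (q i).ker = K i := fun i => by
    ext a
    simp [q, up]
  have hker : ∀ i, (q (i + 1)).ker.map (α i) = (q i).ker := fun i => by
    rw [hq_ker, hq_ker, map_kerThreadsImage]
  refine ⟨fun i => .of (ULift (A i ⧸ K i)), β, q, t, hq, map_comm_of_surjective hq hq_surj hf htq,
    htq, hq_surj, exists_thread_lift q hq hq_surj hker,
    thread_eq_of_map_eq q hq hq_surj hker t f htq fun a ha hfa i => ?_,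
    exists_eq_sub_of_map_eq_sub q hq hq_surj hker, fun b => ?_⟩
  · exact (hq_ker i).ge (mem_kerThreadsImage ha hfa i)
  · choose a ha using fun i => hq_surj i (b i)
    exact ⟨a, 0, fun i => by simp [ha]⟩
end

section
/- Let f = (f_i : A_i → C_i) be a level morphism between towers of abelian groups (A_i, α_i) and (C_i, γ_i). Then there exist a tower of abelian groups (B_i, β_i) and level morphisms s = (s_i : A_i → B_i) and t = (t_i : B_i → C_i) with t_i ∘ s_i = f_i for all i, such that each t_i is injective (so each B_i is a subgroup of C_i), the induced homomorphism lim¹_i A_i → lim¹_i B_i is surjective, the induced homomorphism lim¹_i B_i → lim¹_i C_i is injective, and the induced homomorphism lim_i B_i → lim_i C_i is an isomorphism. -/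
/-!
Take `B i ⊆ C i` to consist of the `i`-th terms of sequences `u` whose differences
`u j - γ j (u (j + 1))` lie in the image of `f j` for all `j ≥ i`. This is stable under `γ`
and contains the image of `f` and every thread of `C`, so `lim B = lim C`. Both `lim¹`
statements come from one construction: if `U j` witnesses `b j ∈ B j`, the diagonal sums
`∑_{i ≤ j < k} U j k` have differences `-b k` modulo the image of `f k`. For `i = 0` this
lifts the class of `b` to `lim¹ A`; if `b = d c`, adding `c` gives a witness of `c i ∈ B i`.
-/

open Finset

section TowerFactorization

variable {A C : ℕ → Type} [∀ i, AddCommGroup (A i)] [∀ i, AddCommGroup (C i)]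
variable (γ : ∀ i, C (i + 1) →+ C i) (f : ∀ i, A i →+ C i)

def towerDiff : (∀ i, C i) →+ ∀ i, C i :=
  AddMonoidHom.pi fun i => Pi.evalAddMonoidHom C i - (γ i).comp (Pi.evalAddMonoidHom C (i + 1))

theorem towerDiff_apply (u : ∀ i, C i) (i : ℕ) : towerDiff γ u i = u i - γ i (u (i + 1)) :=
  rfl

def diffInRangeFrom (i : ℕ) : AddSubgroup (∀ j, C j) :=
  (AddSubgroup.pi {j | i ≤ j} fun j => (f j).range).comap (towerDiff γ)

theorem diffInRangeFrom_mono : Monotone (diffInRangeFrom γ f) :=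
  fun _ _ hii' _ hu j hj => hu j (hii'.trans hj)

def factorSubgroup (i : ℕ) : AddSubgroup (C i) :=
  (diffInRangeFrom γ f i).map (Pi.evalAddMonoidHom C i)

theorem mem_factorSubgroup {i : ℕ} {x : C i} :
    x ∈ factorSubgroup γ f i ↔ ∃ u ∈ diffInRangeFrom γ f i, u i = x :=
  AddSubgroup.mem_map

theorem map_mem_factorSubgroup {i : ℕ} {x : C (i + 1)} (hx : x ∈ factorSubgroup γ f (i + 1)) :
    γ i x ∈ factorSubgroup γ f i := by
  obtain ⟨u, hu, rfl⟩ := (mem_factorSubgroup γ f).1 hx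
  refine (mem_factorSubgroup γ f).2 ⟨Function.update u i (γ i (u (i + 1))), ?_, by simp⟩
  intro j (hj : i ≤ j)
  rw [towerDiff_apply]
  rcases hj.eq_or_lt with rfl | hij
  · simp
  · rw [Function.update_of_ne hij.ne', Function.update_of_ne (by omega)]
    exact hu j hij

theorem apply_mem_factorSubgroup (i : ℕ) (a : A i) : f i a ∈ factorSubgroup γ f i := by
  refine (mem_factorSubgroup γ f).2 ⟨Pi.single i (f i a), ?_, by simp⟩
  intro j (hj : i ≤ j)
  rw [towerDiff_apply]
  rcases hj.eq_or_lt with rfl | hij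
  · exact ⟨a, by simp⟩
  · rw [Pi.single_eq_of_ne hij.ne', Pi.single_eq_of_ne (by omega), map_zero, sub_zero]
    exact (f j).range.zero_mem

theorem mem_factorSubgroup_of_thread {c : ∀ i, C i} (hc : ∀ i, γ i (c (i + 1)) = c i) (i : ℕ) :
    c i ∈ factorSubgroup γ f i := by
  refine (mem_factorSubgroup γ f).2 ⟨c, fun j _ => ?_, rfl⟩
  rw [towerDiff_apply, hc, sub_self]
  exact (f j).range.zero_mem

def diagSum (U : ℕ → ∀ j, C j) (i : ℕ) (k : ℕ) : C k :=
  ∑ j ∈ Ico i k, U j k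

theorem towerDiff_diagSum_add_mem {U : ℕ → ∀ j, C j} (hU : ∀ j, U j ∈ diffInRangeFrom γ f j)
    {i k : ℕ} (hik : i ≤ k) :
    towerDiff γ (diagSum U i) k + U k k ∈ (f k).range := by
  have hsum : towerDiff γ (diagSum U i) k + U k k = ∑ j ∈ Ico i (k + 1), towerDiff γ (U j) k := by
    simp only [towerDiff_apply, diagSum, sum_sub_distrib, ← map_sum,
      sum_Ico_succ_top hik, map_add]
    abel
  rw [hsum]
  exact sum_mem fun j hj => hU j k (Nat.lt_succ_iff.1 (mem_Ico.1 hj).2)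

theorem exists_apply_sub_eq_towerDiff {b : ∀ i, C i} (hb : ∀ i, b i ∈ factorSubgroup γ f i) :
    ∃ a : ∀ i, A i, ∃ e : ∀ i, C i, (∀ i, e i ∈ factorSubgroup γ f i) ∧
      ∀ i, f i (a i) - b i = towerDiff γ e i := by
  choose U hU hUb using fun i => (mem_factorSubgroup γ f).1 (hb i)
  choose a ha using fun i => towerDiff_diagSum_add_mem γ f hU (Nat.zero_le i)
  refine ⟨a, diagSum U 0, fun i => (mem_factorSubgroup γ f).2 ⟨∑ j ∈ Ico 0 i, U j, ?_, ?_⟩,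
    fun i => by rw [ha, hUb, add_sub_cancel_right]⟩
  · exact sum_mem fun j hj => diffInRangeFrom_mono γ f (mem_Ico.1 hj).2.le (hU j)
  · simp only [Finset.sum_apply, diagSum]

theorem mem_factorSubgroup_of_towerDiff_mem {c : ∀ i, C i}
    (hc : ∀ i, towerDiff γ c i ∈ factorSubgroup γ f i) (i : ℕ) : c i ∈ factorSubgroup γ f i := by
  choose U hU hUc using fun i => (mem_factorSubgroup γ f).1 (hc i)
  refine (mem_factorSubgroup γ f).2 ⟨c + diagSum U i, fun k hik => ?_, by simp [diagSum]⟩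
  rw [map_add, Pi.add_apply, ← hUc k, add_comm]
  exact towerDiff_diagSum_add_mem γ f hU hik

end TowerFactorization

/-- Lemma (level-factorization (b)): any level morphism `f : (A_i) → (C_i)` of towers
of abelian groups factors through a tower `(B_i)` of subgroups of the `C_i`
(i.e. with each `B_i → C_i` injective) such that `lim¹ A_i → lim¹ B_i` is surjective,
`lim¹ B_i → lim¹ C_i` is injective, and `lim B_i → lim C_i` is an isomorphism.

Here `lim` is the group of threads and `lim¹` is the cokernel of
`d(g)_i = g_i − p_i(g_{i+1})`; the conditions on `lim¹` are expressed on
representatives: surjectivity of `lim¹ A → lim¹ B` says that every `b : ∏ B_i` agrees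
with the image of some `a : ∏ A_i` modulo the range of `d_B`, and injectivity of
`lim¹ B → lim¹ C` says that if the image of `b : ∏ B_i` lies in the range of `d_C`
then `b` lies in the range of `d_B`. -/
theorem stmt_7 (A C : ℕ → Type) [∀ i, AddCommGroup (A i)] [∀ i, AddCommGroup (C i)]
    (α : ∀ i, A (i + 1) →+ A i) (γ : ∀ i, C (i + 1) →+ C i)
    (f : ∀ i, A i →+ C i)
    (hf : ∀ i a, f i (α i a) = γ i (f (i + 1) a)) :
    ∃ (B : ℕ → AddCommGrpCat) (β : ∀ i, ↥(B (i + 1)) →+ ↥(B i))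
      (s : ∀ i, A i →+ ↥(B i)) (t : ∀ i, ↥(B i) →+ C i),
      (∀ i a, s i (α i a) = β i (s (i + 1) a)) ∧
      (∀ i b, t i (β i b) = γ i (t (i + 1) b)) ∧
      (∀ i a, t i (s i a) = f i a) ∧
      (∀ i, Function.Injective (t i)) ∧
      -- `lim¹ A → lim¹ B` is surjective
      (∀ b : ∀ i, ↥(B i), ∃ a : ∀ i, A i, ∃ c : ∀ i, ↥(B i),
        ∀ i, s i (a i) - b i = c i - β i (c (i + 1))) ∧
      -- `lim¹ B → lim¹ C` is injective
      (∀ b : ∀ i, ↥(B i), (∃ c : ∀ i, C i, ∀ i, t i (b i) = c i - γ i (c (i + 1))) →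
        ∃ e : ∀ i, ↥(B i), ∀ i, b i = e i - β i (e (i + 1))) ∧
      -- `lim B → lim C` is injective
      (∀ b b' : ∀ i, ↥(B i), (∀ i, β i (b (i + 1)) = b i) →
        (∀ i, β i (b' (i + 1)) = b' i) → (∀ i, t i (b i) = t i (b' i)) → b = b') ∧
      -- `lim B → lim C` is surjective
      (∀ c : ∀ i, C i, (∀ i, γ i (c (i + 1)) = c i) →
        ∃ b : ∀ i, ↥(B i), (∀ i, β i (b (i + 1)) = b i) ∧ ∀ i, t i (b i) = c i) := by
  let B i := factorSubgroup γ f i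
  -- `B i : Type`, while the statement asks for `AddCommGrpCat` in an arbitrary universe.
  let up i : B i ≃+ ULift (B i) := AddEquiv.ulift.symm
  let β i : ULift (B (i + 1)) →+ ULift (B i) := (up i).toAddMonoidHom.comp <|
    ((γ i).restrict fun _ => map_mem_factorSubgroup γ f).comp (up (i + 1)).symm.toAddMonoidHom
  let s i : A i →+ ULift (B i) :=
    (up i).toAddMonoidHom.comp <| (f i).codRestrict (B i) (apply_mem_factorSubgroup γ f i)
  let t i : ULift (B i) →+ C i := (B i).subtype.comp (up i).symm.toAddMonoidHom
  refine ⟨fun i => .of (ULift (B i)), β, s, t,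
    fun i a => congrArg ULift.up (Subtype.ext (hf i a)), fun _ _ => rfl, fun _ _ => rfl,
    fun i _ _ h => ULift.down_injective (Subtype.ext h), fun b => ?_, ?_, ?_, ?_⟩
  · obtain ⟨a, e, he, hae⟩ := exists_apply_sub_eq_towerDiff γ f fun i => (b i).down.2
    exact ⟨a, fun i => ⟨⟨e i, he i⟩⟩, fun i => ULift.down_injective (Subtype.ext (hae i))⟩
  · rintro b ⟨c, hc⟩
    have hcB := mem_factorSubgroup_of_towerDiff_mem γ f (c := c) fun i => by
      rw [towerDiff_apply, ← hc i]
      exact (b i).down.2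
    exact ⟨fun i => ⟨⟨c i, hcB i⟩⟩, fun i => ULift.down_injective (Subtype.ext (hc i))⟩
  · exact fun b b' _ _ h => funext fun i => ULift.down_injective (Subtype.ext (h i))
  · intro c hc
    exact ⟨fun i => ⟨⟨c i, mem_factorSubgroup_of_thread γ f hc i⟩⟩,
      fun i => ULift.down_injective (Subtype.ext (hc i)), fun _ => rfl⟩
end

section
/- Let f = (f_i : A_i → C_i) be a level morphism between towers of (not necessarily abelian) groups (A_i, α_i) and (C_i, γ_i), and suppose the tower (A_i) satisfies the Mittag-Leffler condition: for each i there exists j ≥ i such that the image of the composite bonding homomorphism A_k → A_i equals the image of A_j → A_i for all k ≥ j. Then there exist a tower of groups (B_i, β_i) and level morphisms s = (s_i : A_i → B_i) and t = (t_i : B_i → C_i) with t_i ∘ s_i = f_i for all i, such that each s_i is surjective (so each B_i is a quotient group of A_i), the induced map lim_i A_i → lim_i B_i is surjective, the induced map lim_i B_i → lim_i C_i is injective, and lim¹_i B_i is trivial (i.e. the action of ∏_i B_i on itself given by (h · g)_i = h_i · g_i · β_i(h_{i+1})⁻¹ is transitive). -/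
/-- The composite bonding homomorphism `A_{i+m} → A_i` of a tower of groups
(the identity when `m = 0`). -/
def aDown (A : ℕ → Type) [∀ i, Group (A i)] (α : ∀ i, A (i + 1) →* A i) :
    ∀ (m i : ℕ), A (i + m) →* A i
  | 0, _ => MonoidHom.id _
  | m + 1, i => (aDown A α m i).comp (α (i + m))

/-!
Let `M i ≤ A i` consist of the elements lying on a thread of kernels `(ker f_k)_{k ≥ i}`, let
`N i` be its normal closure and `B i = A i ⧸ N i`; then `f` factors through `B`. Once the images
of `A` have stabilised, their elements lie on threads, so conjugating by them preserves `M i`;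
hence the image of `N (i + m)` in `A i` is exactly `M i` for large `m`, and the tower `N` is
Mittag-Leffler. A Mittag-Leffler tower of nonempty sets has a thread, because its stable images
map onto each other. Applied to the cosets of `N` over a thread of `B`, this lifts threads from
`B` to `A`; a thread of `A` with trivial image in `C` lies in `M`, which gives injectivity; and
since `B`, a quotient of `A`, is Mittag-Leffler, so is the tower of twisted maps
`x ↦ g' i * β i x * (g i)⁻¹`, whose threads are exactly the solutions `c` of the `lim¹` equation.
-/

open Set

namespace Tower

variable {X : ℕ → Type*} (δ : ∀ i, X (i + 1) → X i)

/-- The image of `S (i + m)` in `X i`. Peeling off the bottom map, rather than the top one,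
avoids casts between `X (i + (m + 1))` and `X ((i + 1) + m)`. -/
def iterImage (S : ∀ i, Set (X i)) : ℕ → ∀ i, Set (X i)
  | 0, i => S i
  | m + 1, i => δ i '' iterImage S m (i + 1)

def stableImage (S : ∀ i, Set (X i)) (i : ℕ) : Set (X i) :=
  ⋂ m, iterImage δ S m i

def IsMittagLefflerOn (S : ∀ i, Set (X i)) : Prop :=
  ∀ i, ∃ m₀, ∀ m, iterImage δ S m₀ i ⊆ iterImage δ S m i

abbrev IsMittagLeffler : Prop :=
  IsMittagLefflerOn δ fun _ => univ

variable {δ}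

theorem iterImage_add (S : ∀ i, Set (X i)) :
    ∀ m r i, iterImage δ S (m + r) i = iterImage δ (iterImage δ S r) m i
  | 0, r, i => by rw [Nat.zero_add]; rfl
  | m + 1, r, i => by
    rw [Nat.add_right_comm]
    exact congrArg (δ i '' ·) (iterImage_add S m r (i + 1))

theorem iterImage_mono {S T : ∀ i, Set (X i)} (h : ∀ i, S i ⊆ T i) :
    ∀ m i, iterImage δ S m i ⊆ iterImage δ T m i
  | 0, i => h i
  | m + 1, i => image_mono (iterImage_mono h m (i + 1))

theorem iterImage_nonempty {S : ∀ i, Set (X i)} (h : ∀ i, (S i).Nonempty) :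
    ∀ m i, (iterImage δ S m i).Nonempty
  | 0, i => h i
  | m + 1, i => (iterImage_nonempty h m (i + 1)).image _

section MapsTo

variable {S : ∀ i, Set (X i)} (hS : ∀ i, MapsTo (δ i) (S (i + 1)) (S i))
include hS

theorem iterImage_subset : ∀ m i, iterImage δ S m i ⊆ S i
  | 0, _ => subset_rfl
  | m + 1, i => (hS i).image_subset.trans' (image_mono (iterImage_subset m (i + 1)))

theorem iterImage_succ_subset : ∀ m i, iterImage δ S (m + 1) i ⊆ iterImage δ S m i
  | 0, i => (hS i).image_subset
  | m + 1, i => image_mono (iterImage_succ_subset m (i + 1))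

theorem iterImage_antitone (i : ℕ) : Antitone fun m => iterImage δ S m i :=
  antitone_nat_of_succ_le fun m => iterImage_succ_subset hS m i

theorem isMittagLefflerOn_iff_subset_succ :
    IsMittagLefflerOn δ S ↔
      ∀ i, ∃ m₀, ∀ m, m₀ ≤ m → iterImage δ S m i ⊆ iterImage δ S (m + 1) i := by
  refine forall_congr' fun i => ⟨fun ⟨m₀, h⟩ => ⟨m₀, fun m hm =>
    (iterImage_antitone hS i hm).trans (h (m + 1))⟩, fun ⟨m₀, h⟩ => ⟨m₀, fun m => ?_⟩⟩
  rcases le_total m m₀ with hm | hm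
  · exact iterImage_antitone hS i hm
  · induction m, hm using Nat.le_induction with
    | base => exact subset_rfl
    | succ m hm ih => exact ih.trans (h m hm)

end MapsTo

theorem stableImage_subset (S : ∀ i, Set (X i)) (i : ℕ) : stableImage δ S i ⊆ S i :=
  iInter_subset _ 0

theorem IsMittagLefflerOn.iterImage_subset_stableImage {S : ∀ i, Set (X i)}
    (h : IsMittagLefflerOn δ S) (i : ℕ) : ∃ m₀, iterImage δ S m₀ i ⊆ stableImage δ S i :=
  (h i).imp fun _ => subset_iInter

theorem IsMittagLefflerOn.exists_lift {S : ∀ i, Set (X i)} (h : IsMittagLefflerOn δ S) {k : ℕ}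
    {x : X k} (hx : x ∈ stableImage δ S k) : ∃ x' ∈ stableImage δ S (k + 1), δ k x' = x := by
  obtain ⟨m₀, hm₀⟩ := h (k + 1)
  obtain ⟨x', hx', rfl⟩ := mem_iInter.1 hx (m₀ + 1)
  exact ⟨x', mem_iInter.2 fun m => hm₀ m hx', rfl⟩

theorem exists_thread_of_lift [∀ i, Nonempty (X i)] (D : ∀ i, Set (X i))
    (hD : ∀ k, ∀ x ∈ D k, ∃ x' ∈ D (k + 1), δ k x' = x) {i : ℕ} {x : X i} (hx : x ∈ D i) :
    ∃ y : ∀ k, X k, y i = x ∧ ∀ k, i ≤ k → y k ∈ D k ∧ δ k (y (k + 1)) = y k := by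
  choose lift hlift using fun k (x : D k) => hD k x x.2
  let z : ∀ k, i ≤ k → D k := fun k hk =>
    Nat.leRecOn hk (fun {k} x => ⟨lift k x, (hlift k x).1⟩) ⟨x, hx⟩
  refine ⟨fun k => if hk : i ≤ k then z k hk else Classical.arbitrary _, ?_, fun k hk => ?_⟩
  · simp only [dif_pos le_rfl, z, Nat.leRecOn_self]
  simp only [dif_pos hk, dif_pos (hk.trans k.le_succ), z, Nat.leRecOn_succ hk]
  exact ⟨Subtype.coe_prop _, (hlift k _).2⟩

theorem IsMittagLefflerOn.exists_thread_through [∀ i, Nonempty (X i)] {S : ∀ i, Set (X i)}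
    (h : IsMittagLefflerOn δ S) {i : ℕ} {x : X i} (hx : x ∈ stableImage δ S i) :
    ∃ y : ∀ k, X k, y i = x ∧ ∀ k, i ≤ k → δ k (y (k + 1)) = y k :=
  (exists_thread_of_lift (stableImage δ S) (fun _ _ => h.exists_lift) hx).imp fun _ hy =>
    ⟨hy.1, fun k hk => (hy.2 k hk).2⟩

theorem IsMittagLefflerOn.exists_thread {S : ∀ i, Set (X i)} (h : IsMittagLefflerOn δ S)
    (hS : ∀ i, (S i).Nonempty) :
    ∃ y : ∀ k, X k, ∀ k, y k ∈ S k ∧ δ k (y (k + 1)) = y k := by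
  have : ∀ i, Nonempty (X i) := fun i => (hS i).to_subtype.map Subtype.val
  obtain ⟨m₀, hm₀⟩ := h.iterImage_subset_stableImage 0
  obtain ⟨x, hx⟩ := iterImage_nonempty hS m₀ 0
  obtain ⟨y, -, hy⟩ := exists_thread_of_lift (stableImage δ S) (fun _ _ => h.exists_lift) (hm₀ hx)
  exact ⟨y, fun k => ⟨stableImage_subset S k (hy k k.zero_le).1, (hy k k.zero_le).2⟩⟩

theorem iterImage_image {Y : ℕ → Type*} {ε : ∀ i, Y (i + 1) → Y i} (s : ∀ i, X i → Y i)
    (hs : ∀ i x, s i (δ i x) = ε i (s (i + 1) x)) (S : ∀ i, Set (X i)) :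
    ∀ m i, iterImage ε (fun k => s k '' S k) m i = s i '' iterImage δ S m i
  | 0, _ => rfl
  | m + 1, i => by
    simp only [iterImage, iterImage_image s hs S m (i + 1), image_image, hs]

theorem IsMittagLeffler.of_surjective {Y : ℕ → Type*} {ε : ∀ i, Y (i + 1) → Y i}
    (h : IsMittagLeffler δ) (s : ∀ i, X i → Y i) (hs : ∀ i x, s i (δ i x) = ε i (s (i + 1) x))
    (hsurj : ∀ i, Function.Surjective (s i)) : IsMittagLeffler ε := by
  have himage : (fun k => s k '' univ) = fun _ => univ :=
    funext fun k => by rw [image_univ, (hsurj k).range_eq]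
  have key : ∀ m i, iterImage ε (fun _ => univ) m i = s i '' iterImage δ (fun _ => univ) m i :=
    fun m i => by rw [← iterImage_image s hs, himage]
  exact fun i => (h i).imp fun m₀ hm₀ m => by simpa only [key] using image_mono (hm₀ m)



variable {A : ℕ → Type} [∀ i, Group (A i)] (α : ∀ i, A (i + 1) →* A i)

theorem image_aDown :
    ∀ m i (S : ∀ i, Set (A i)), aDown A α m i '' S (i + m) = iterImage (fun k => α k) S m i
  | 0, _, S => image_id (S _)
  | m + 1, i, S => by
    rw [iterImage_add, ← image_aDown m i, iterImage, iterImage, image_image]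
    rfl

theorem range_aDown (m i : ℕ) :
    Set.range (aDown A α m i) = iterImage (fun k => α k) (fun _ => univ) m i :=
  image_univ.symm.trans (image_aDown α m i fun _ => univ)

theorem isMittagLeffler_of_range_aDown
    (hML : ∀ i, ∃ j, i ≤ j ∧ ∀ k, j ≤ k →
      (aDown A α (k - i) i).range = (aDown A α (j - i) i).range) :
    IsMittagLeffler fun k => α k := by
  refine (isMittagLefflerOn_iff_subset_succ fun _ => mapsTo_univ _ _).2 fun i => ?_
  obtain ⟨j, hij, hj⟩ := hML i
  have hrange : ∀ m, j - i ≤ m → (aDown A α m i).range = (aDown A α (j - i) i).range :=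
    fun m hm => by rw [← hj (i + m) (by omega), Nat.add_sub_cancel_left]
  refine ⟨j - i, fun m hm => ?_⟩
  simp only [← range_aDown, ← MonoidHom.coe_range, hrange m hm, hrange (m + 1) (by omega),
    subset_rfl]

variable {α}

theorem iterImage_twist (g g' : ∀ i, A i) :
    ∀ m i, ∃ l r : A i, ∀ S : ∀ i, Set (A i),
      iterImage (fun k x => g' k * α k x * (g k)⁻¹) S m i =
        (fun z => l * z * r) '' iterImage (fun k => α k) S m i
  | 0, i => ⟨1, 1, fun S => by simp [iterImage]⟩
  | m + 1, i => by
    obtain ⟨l, r, h⟩ := iterImage_twist g g' m (i + 1)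
    refine ⟨g' i * α i l, α i r * (g i)⁻¹, fun S => ?_⟩
    rw [iterImage, iterImage, h, image_image, image_image]
    simp only [map_mul, mul_assoc]

theorem IsMittagLeffler.twist (h : IsMittagLeffler fun k => α k) (g g' : ∀ i, A i) :
    IsMittagLeffler fun k x => g' k * α k x * (g k)⁻¹ := by
  refine (isMittagLefflerOn_iff_subset_succ fun _ => mapsTo_univ _ _).2 fun i => ?_
  obtain ⟨m₀, hm₀⟩ := (isMittagLefflerOn_iff_subset_succ fun _ => mapsTo_univ _ _).1 h i
  refine ⟨m₀, fun m hm => ?_⟩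
  obtain ⟨l, r, hlr⟩ := iterImage_twist g g' m i
  rw [iterImage_add, hlr, hlr]
  refine image_mono ?_
  rw [← image_aDown, ← image_aDown]
  rintro _ ⟨w, -, rfl⟩
  set u := (g' (i + m))⁻¹ * w * g (i + m) with hu
  obtain ⟨v, hv⟩ : aDown A α m i u ∈ range (aDown A α (m + 1) i) := by
    rw [range_aDown]
    exact hm₀ m hm (range_aDown α m i ▸ mem_range_self u)
  refine ⟨g' (i + m) * α (i + m) v * (g (i + m))⁻¹, ⟨v, trivial, rfl⟩, ?_⟩
  change aDown A α m i (α (i + m) v) = _ at hv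
  rw [map_mul, map_mul, hv, ← map_mul, ← map_mul, hu]
  group

theorem IsMittagLeffler.exists_twisted_thread (h : IsMittagLeffler fun k => α k)
    (g g' : ∀ i, A i) : ∃ c : ∀ i, A i, ∀ i, c i * g i * (α i (c (i + 1)))⁻¹ = g' i := by
  obtain ⟨c, hc⟩ := (h.twist g g').exists_thread fun _ => univ_nonempty
  exact ⟨c, fun i => by rw [← (hc i).2]; group⟩

variable (α) in
theorem exists_thread_lift_of_isMittagLefflerOn (N : ∀ i, Subgroup (A i)) [∀ i, (N i).Normal]
    (hN : ∀ i, N (i + 1) ≤ (N i).comap (α i))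
    (hML : IsMittagLefflerOn (fun k => α k) fun i => N i) (b : ∀ i, A i ⧸ N i)
    (hb : ∀ i, QuotientGroup.map _ _ (α i) (hN i) (b (i + 1)) = b i) :
    ∃ a : ∀ i, A i, (∀ i, α i (a (i + 1)) = a i) ∧ ∀ i, (a i : A i ⧸ N i) = b i := by
  set F : ∀ i, Set (A i) := fun i => {a | (a : A i ⧸ N i) = b i}
  have hF : ∀ i, MapsTo (α i) (F (i + 1)) (F i) := fun i a ha => by
    change (α i a : A i ⧸ N i) = b i
    rw [← hb, ← ha]
    rfl
  have hFne : ∀ i, (F i).Nonempty := fun i => QuotientGroup.mk_surjective (b i)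
  suffices IsMittagLefflerOn (fun k => α k) F by
    obtain ⟨a, ha⟩ := this.exists_thread hFne
    exact ⟨a, fun i => (ha i).2, fun i => (ha i).1⟩
  refine (isMittagLefflerOn_iff_subset_succ hF).2 fun i => ?_
  obtain ⟨m₀, hm₀⟩ := (isMittagLefflerOn_iff_subset_succ (S := fun i => (N i : Set (A i)))
    fun i _ hx => hN i hx).1 hML i
  refine ⟨m₀, fun m hm => ?_⟩
  rw [← image_aDown, ← image_aDown]
  rintro _ ⟨w, hw, rfl⟩
  obtain ⟨v, hv⟩ := hFne (i + m + 1)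
  -- `w` and `α v` lie in the same coset of `N (i + m)`, and the image of `N` at level `i`
  -- lifts one level higher
  have hvw : (α (i + m) v)⁻¹ * w ∈ N (i + m) := QuotientGroup.eq.1 ((hF _ hv).trans hw.symm)
  obtain ⟨n, hn, hn'⟩ : aDown A α m i ((α (i + m) v)⁻¹ * w) ∈
      aDown A α (m + 1) i '' (N (i + (m + 1)) : Set (A (i + (m + 1)))) := by
    rw [image_aDown α (m + 1) i fun i => N i]
    exact hm₀ m hm (image_aDown α m i (fun i => N i) ▸ mem_image_of_mem _ hvw)
  refine ⟨v * n, ?_, ?_⟩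
  · change ((v * n : A (i + m + 1)) : A (i + m + 1) ⧸ N (i + m + 1)) = b (i + m + 1)
    rw [QuotientGroup.mk_mul, (QuotientGroup.eq_one_iff (N := N (i + m + 1)) n).2 hn, mul_one]
    exact hv
  · rw [map_mul, hn']
    change aDown A α m i (α (i + m) v) * _ = _
    rw [← map_mul, mul_inv_cancel_left]

end Tower

section Factorization

open Tower

variable {A C : ℕ → Type} [∀ i, Group (A i)] [∀ i, Group (C i)]
  (α : ∀ i, A (i + 1) →* A i) (f : ∀ i, A i →* C i)

def kerThreadImage (i : ℕ) : Subgroup (A i) where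
  carrier := {x | ∃ y : ∀ k, A k, y i = x ∧ ∀ k, i ≤ k → α k (y (k + 1)) = y k ∧ f k (y k) = 1}
  one_mem' := ⟨1, rfl, fun k _ => by simp⟩
  mul_mem' := by
    rintro _ _ ⟨y, rfl, hy⟩ ⟨z, rfl, hz⟩
    exact ⟨y * z, rfl, fun k hk => by simp [hy k hk, hz k hk]⟩
  inv_mem' := by
    rintro _ ⟨y, rfl, hy⟩
    exact ⟨y⁻¹, rfl, fun k hk => by simp [hy k hk]⟩

theorem kerThreadImage_le_ker (i : ℕ) : kerThreadImage α f i ≤ (f i).ker := by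
  rintro _ ⟨y, rfl, hy⟩
  exact (hy i le_rfl).2

theorem kerThreadImage_subset_iterImage : ∀ m i,
    (kerThreadImage α f i : Set (A i)) ⊆
      iterImage (fun k => α k) (fun k => kerThreadImage α f k) m i
  | 0, _ => subset_rfl
  | m + 1, i => by
    rintro _ ⟨y, rfl, hy⟩
    exact ⟨y (i + 1), kerThreadImage_subset_iterImage m (i + 1)
      ⟨y, rfl, fun k hk => hy k (by omega)⟩, (hy i le_rfl).1⟩

theorem conj_mem_kerThreadImage (hA : IsMittagLeffler fun k => α k) {i : ℕ} {u x : A i}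
    (hu : u ∈ stableImage (fun k => α k) (fun _ => univ) i) (hx : x ∈ kerThreadImage α f i) :
    u * x * u⁻¹ ∈ kerThreadImage α f i := by
  obtain ⟨z, rfl, hz⟩ := hA.exists_thread_through hu
  obtain ⟨y, rfl, hy⟩ := hx
  exact ⟨z * y * z⁻¹, rfl, fun k hk => by simp [hz k hk, hy k hk]⟩

def kerThreadClosure (i : ℕ) : Subgroup (A i) :=
  Subgroup.normalClosure (kerThreadImage α f i)

instance (i : ℕ) : (kerThreadClosure α f i).Normal :=
  Subgroup.normalClosure_normal

theorem kerThreadClosure_le_ker (i : ℕ) : kerThreadClosure α f i ≤ (f i).ker :=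
  Subgroup.normalClosure_le_normal (kerThreadImage_le_ker α f i)

theorem mk_eq_mk_of_thread {a a' : ∀ k, A k} (ha : ∀ k, α k (a (k + 1)) = a k)
    (ha' : ∀ k, α k (a' (k + 1)) = a' k) (h : ∀ k, f k (a k) = f k (a' k)) (i : ℕ) :
    (a i : A i ⧸ kerThreadClosure α f i) = a' i :=
  QuotientGroup.eq.2 <| Subgroup.subset_normalClosure
    ⟨a⁻¹ * a', rfl, fun k _ => by simp [ha, ha', h]⟩

variable {α f} {γ : ∀ i, C (i + 1) →* C i} (hf : ∀ i a, f i (α i a) = γ i (f (i + 1) a))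
include hf

theorem mapsTo_kerThreadImage (i : ℕ) :
    MapsTo (α i) (kerThreadImage α f (i + 1)) (kerThreadImage α f i) := by
  rintro _ ⟨y, rfl, hy⟩
  refine ⟨Function.update y i (α i (y (i + 1))), by simp, fun k hk => ?_⟩
  rcases hk.eq_or_lt with rfl | hk
  · simp [hf, (hy (i + 1) le_rfl).2]
  · simp [Function.update_of_ne hk.ne', Function.update_of_ne (by omega : k + 1 ≠ i),
      hy k (by omega)]

theorem kerThreadClosure_le_comap (i : ℕ) :
    kerThreadClosure α f (i + 1) ≤ (kerThreadClosure α f i).comap (α i) :=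
  Subgroup.normalClosure_le_normal fun _ hx =>
    Subgroup.subset_normalClosure (mapsTo_kerThreadImage hf i hx)

/-- Conjugation by elements of the stable image preserves `kerThreadImage`, so past the stage
where the images of `A` stabilise the normal closure adds nothing new at level `i`. -/
theorem kerThreadClosure_le_comap_aDown (hA : IsMittagLeffler fun k => α k) {m i : ℕ}
    (hm : iterImage (fun k => α k) (fun _ => univ) m i ⊆
      stableImage (fun k => α k) (fun _ => univ) i) :
    kerThreadClosure α f (i + m) ≤ (kerThreadImage α f i).comap (aDown A α m i) := by
  refine (Subgroup.closure_le _).2 fun c hc => ?_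
  obtain ⟨x, hx, hconj⟩ := Group.mem_conjugatesOfSet_iff.1 hc
  obtain ⟨g, rfl⟩ := isConj_iff.1 hconj
  rw [SetLike.mem_coe, Subgroup.mem_comap, map_mul, map_mul, map_inv]
  refine conj_mem_kerThreadImage α f hA (hm ?_) ?_
  · exact range_aDown α m i ▸ mem_range_self g
  · refine iterImage_subset (S := fun k => (kerThreadImage α f k : Set (A k)))
      (mapsTo_kerThreadImage hf) m i ?_
    exact image_aDown α m i (fun k => kerThreadImage α f k) ▸ mem_image_of_mem _ hx

theorem isMittagLefflerOn_kerThreadClosure (hA : IsMittagLeffler fun k => α k) :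
    IsMittagLefflerOn (fun k => α k) fun i => kerThreadClosure α f i := by
  intro i
  obtain ⟨m₀, hm₀⟩ := hA.iterImage_subset_stableImage i
  refine ⟨m₀, fun m => ?_⟩
  rw [← image_aDown α m₀ i]
  calc aDown A α m₀ i '' (kerThreadClosure α f (i + m₀) : Set (A (i + m₀)))
      ⊆ kerThreadImage α f i := image_subset_iff.2 (kerThreadClosure_le_comap_aDown hf hA hm₀)
    _ ⊆ iterImage (fun k => α k) (fun k => kerThreadImage α f k) m i :=
      kerThreadImage_subset_iterImage α f m i
    _ ⊆ _ := iterImage_mono (fun k => Subgroup.subset_normalClosure) m i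

end Factorization

/-- Lemma (non-abelian factorization): a level morphism `f : (A_i) → (C_i)` of towers
of groups, with `(A_i)` satisfying the Mittag-Leffler condition, factors through a
tower `(B_i)` of quotient groups of the `A_i` such that `lim A_i → lim B_i` is
surjective, `lim B_i → lim C_i` is injective, and `lim¹ B_i` is trivial (the standard
action of `∏ B_i` on itself is transitive).  The image of `A_k → A_i` for `k ≥ i` is
the range of `aDown A α (k - i) i` (note `i + (k - i) = k`). -/
theorem stmt_8 (A C : ℕ → Type) [∀ i, Group (A i)] [∀ i, Group (C i)]
    (α : ∀ i, A (i + 1) →* A i) (γ : ∀ i, C (i + 1) →* C i)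
    (f : ∀ i, A i →* C i)
    (hf : ∀ i a, f i (α i a) = γ i (f (i + 1) a))
    (hML : ∀ i, ∃ j, i ≤ j ∧ ∀ k, j ≤ k →
      (aDown A α (k - i) i).range = (aDown A α (j - i) i).range) :
    ∃ (B : ℕ → GrpCat) (β : ∀ i, ↥(B (i + 1)) →* ↥(B i))
      (s : ∀ i, A i →* ↥(B i)) (t : ∀ i, ↥(B i) →* C i),
      (∀ i a, s i (α i a) = β i (s (i + 1) a)) ∧
      (∀ i b, t i (β i b) = γ i (t (i + 1) b)) ∧
      (∀ i a, t i (s i a) = f i a) ∧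
      (∀ i, Function.Surjective (s i)) ∧
      -- `lim A → lim B` is surjective
      (∀ b : ∀ i, ↥(B i), (∀ i, β i (b (i + 1)) = b i) →
        ∃ a : ∀ i, A i, (∀ i, α i (a (i + 1)) = a i) ∧ ∀ i, s i (a i) = b i) ∧
      -- `lim B → lim C` is injective
      (∀ b b' : ∀ i, ↥(B i), (∀ i, β i (b (i + 1)) = b i) →
        (∀ i, β i (b' (i + 1)) = b' i) → (∀ i, t i (b i) = t i (b' i)) → b = b') ∧
      -- `lim¹ B` is trivial
      (∀ g g' : ∀ i, ↥(B i), ∃ c : ∀ i, ↥(B i),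
        ∀ i, c i * g i * (β i (c (i + 1)))⁻¹ = g' i) := by
  have hA := Tower.isMittagLeffler_of_range_aDown α hML
  set N := kerThreadClosure α f
  have hN := kerThreadClosure_le_comap hf
  set β : ∀ i, A (i + 1) ⧸ N (i + 1) →* A i ⧸ N i := fun i => QuotientGroup.map _ _ (α i) (hN i)
  have hlift := Tower.exists_thread_lift_of_isMittagLefflerOn α N hN
    (isMittagLefflerOn_kerThreadClosure hf hA)
  have hB : Tower.IsMittagLeffler fun k => β k :=
    hA.of_surjective (fun i => QuotientGroup.mk) (fun _ _ => rfl)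
      fun i => QuotientGroup.mk_surjective
  -- `GrpCat` lives in an arbitrary universe, hence the `ULift`
  refine ⟨fun i => GrpCat.of (ULift (A i ⧸ N i)),
    fun i => MulEquiv.ulift.symm.toMonoidHom.comp ((β i).comp MulEquiv.ulift.toMonoidHom),
    fun i => MulEquiv.ulift.symm.toMonoidHom.comp (QuotientGroup.mk' (N i)),
    fun i => (QuotientGroup.lift (N i) (f i) (kerThreadClosure_le_ker α f i)).comp
      MulEquiv.ulift.toMonoidHom,
    fun _ _ => rfl, ?_, fun _ _ => rfl,
    fun i b => (QuotientGroup.mk_surjective b.down).imp fun _ => congrArg ULift.up,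
    fun b hb => ?_, fun b b' hb hb' htb => ?_, fun g g' => ?_⟩
  · rintro i ⟨b⟩
    induction b using QuotientGroup.induction_on
    exact hf i _
  · obtain ⟨a, ha, hab⟩ := hlift (fun i => (b i).down) fun i => congrArg ULift.down (hb i)
    exact ⟨a, ha, fun i => congrArg ULift.up (hab i)⟩
  · obtain ⟨a, ha, hab⟩ := hlift (fun i => (b i).down) fun i => congrArg ULift.down (hb i)
    obtain ⟨a', ha', hab'⟩ := hlift (fun i => (b' i).down) fun i => congrArg ULift.down (hb' i)
    obtain rfl : b = fun i => ULift.up (a i : A i ⧸ N i) := funext fun i => by rw [hab]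
    obtain rfl : b' = fun i => ULift.up (a' i : A i ⧸ N i) := funext fun i => by rw [hab']
    exact funext fun i => congrArg ULift.up (mk_eq_mk_of_thread α f ha ha' htb i)
  · obtain ⟨c, hc⟩ := hB.exists_twisted_thread (fun i => (g i).down) fun i => (g' i).down
    exact ⟨fun i => ULift.up (c i), fun i => congrArg ULift.up (hc i)⟩
end

section
/- Let X, Y₊, Y₋, Z be compact metrizable topological spaces, let f₊ : X → Y₊, f₋ : X → Y₋, g₊ : Y₊ → Z, g₋ : Y₋ → Z be continuous maps, and let H : X × [0,1] → Z be a continuous homotopy with H(x,0) = g₊(f₊(x)) and H(x,1) = g₋(f₋(x)) for all x ∈ X. Define Φ₊ : MC(f₊) → MC(g₋) by Φ₊([x,t]) = H(x, 2t) ∈ Z ⊆ MC(g₋) for 0 ≤ t ≤ 1/2, Φ₊([x,t]) = [f₋(x), 2t−1] for 1/2 ≤ t ≤ 1, and Φ₊(y) = g₊(y) ∈ Z for y ∈ Y₊; define Φ₋ : MC(f₋) → MC(g₊) by Φ₋([x,t]) = H(x, 1−2t) ∈ Z ⊆ MC(g₊) for 0 ≤ t ≤ 1/2, Φ₋([x,t])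 = [f₊(x), 2t−1] for 1/2 ≤ t ≤ 1, and Φ₋(y) = g₋(y) ∈ Z for y ∈ Y₋. Then Φ₊ and Φ₋ are well-defined continuous maps, and the mapping cylinders MC(Φ₊) and MC(Φ₋) are homeomorphic. -/
open unitInterval

/-- The defining relation of the mapping cylinder of `u : A → B`: the point `(a, 0)`
of the cylinder `A × [0,1]` is identified with `u a ∈ B`. -/
def MCRel {A B : Type*} (u : A → B) :
    (A × unitInterval ⊕ B) → (A × unitInterval ⊕ B) → Prop :=
  fun x y => ∃ a, x = Sum.inl (a, 0) ∧ y = Sum.inr (u a)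

/-- The mapping cylinder of `u : A → B`: the quotient of `(A × [0,1]) ⊔ B` by the
identifications `(a, 0) ∼ u a`, with the quotient topology. -/
def MC {A B : Type*} [TopologicalSpace A] [TopologicalSpace B] (u : A → B) : Type _ :=
  Quot (MCRel u)

instance {A B : Type*} [TopologicalSpace A] [TopologicalSpace B] (u : A → B) :
    TopologicalSpace (MC u) :=
  inferInstanceAs (TopologicalSpace (Quot (MCRel u)))

/-- The class `[a, t]` of a cylinder point in the mapping cylinder. -/
def MC.cyl {A B : Type*} [TopologicalSpace A] [TopologicalSpace B] (u : A → B)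
    (a : A) (t : unitInterval) : MC u :=
  Quot.mk _ (Sum.inl (a, t))

/-- The class of a point of `B` in the mapping cylinder (the `0`-end). -/
def MC.base {A B : Type*} [TopologicalSpace A] [TopologicalSpace B] (u : A → B)
    (b : B) : MC u :=
  Quot.mk _ (Sum.inr b)

/-!
`MC(Φ₊)` and `MC(Φ₋)` are both obtained by gluing `X × [0,1]²` (coordinates `(t, s)`, with `t` the
parameter of `MC(f±)` and `s` that of the outer cylinder) to `Y₊ × [0,1]`, `Y₋ × [0,1]` and `Z`
along the edges `t = 0` and `s = 0` of the square. In `MC(Φ₊)` the left edge goes to `Y₊ × [0,1]`,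
the left half of the bottom edge to `Z` through `H`, and its right half to `Y₋ × [0,1]`; in
`MC(Φ₋)` the roles of `Y₊` and `Y₋` are exchanged and `H` runs backwards. A piecewise affine
involution of the square that exchanges the left edge with the right half of the bottom edge and
reflects the left half of the bottom edge therefore matches the two gluings, and induces mutually
inverse continuous maps; on the remaining pieces these maps merely relabel cylinder coordinates.
-/

namespace MC

variable {A B C : Type*} [TopologicalSpace A] [TopologicalSpace B] {u : A → B}

theorem cyl_zero (u : A → B) (a : A) : cyl u a 0 = base u (u a) :=
  Quot.sound ⟨a, rfl, rfl⟩

theorem ind {P : MC u → Prop} (cyl : ∀ a t, P (cyl u a t)) (base : ∀ b, P (base u b))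
    (m : MC u) : P m :=
  Quot.ind (Sum.rec (fun p => cyl p.1 p.2) base) m

@[fun_prop]
theorem continuous_cyl {α : Type*} [TopologicalSpace α] {F : α → A} {T : α → I}
    (hF : Continuous F) (hT : Continuous T) : Continuous fun x => cyl u (F x) (T x) :=
  continuous_quot_mk.comp (continuous_inl.comp (hF.prodMk hT))

@[fun_prop]
theorem continuous_base : Continuous (base u) :=
  continuous_quot_mk.comp continuous_inr

def lift (φ : A × I → C) (ψ : B → C) (h : ∀ a, φ (a, 0) = ψ (u a)) : MC u → C :=
  Quot.lift (Sum.elim φ ψ) (by rintro _ _ ⟨a, rfl, rfl⟩; exact h a)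

variable {φ : A × I → C} {ψ : B → C} {h : ∀ a, φ (a, 0) = ψ (u a)}

@[simp]
theorem lift_cyl (a : A) (t : I) : lift φ ψ h (cyl u a t) = φ (a, t) := rfl

theorem continuous_lift [TopologicalSpace C] (hφ : Continuous φ) (hψ : Continuous ψ) :
    Continuous (lift φ ψ h) :=
  continuous_quot_lift _ (hφ.sumElim hψ)

def liftProd (φ : (A × I) × I → C) (ψ : B × I → C)
    (h : ∀ a s, φ ((a, 0), s) = ψ (u a, s)) : MC u × I → C :=
  fun p => lift (fun q => φ (q, p.2)) (fun b => ψ (b, p.2)) (fun a => h a p.2) p.1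

@[simp]
theorem liftProd_cyl {φ : (A × I) × I → C} {ψ : B × I → C} {h : ∀ a s, φ ((a, 0), s) = ψ (u a, s)}
    (a : A) (t s : I) : liftProd φ ψ h (cyl u a t, s) = φ ((a, t), s) := rfl

theorem continuous_liftProd [TopologicalSpace C] {φ : (A × I) × I → C} {ψ : B × I → C}
    {h : ∀ a s, φ ((a, 0), s) = ψ (u a, s)} (hφ : Continuous φ) (hψ : Continuous ψ) :
    Continuous (liftProd φ ψ h) := by
  refine isQuotientMap_quot_mk.continuous_lift_prod_left (f := Quot.mk (MCRel u)) ?_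
  refine ((hφ.sumElim hψ).comp Homeomorph.sumProdDistrib.continuous).congr ?_
  rintro ⟨a | b, s⟩ <;> rfl

end MC

namespace unitInterval

theorem squareInvolution_fst_mem (p : I × I) :
    max (p.2 : ℝ) (min ((1 + p.2) / 2) ((1 + 3 * p.2) / 2 - p.1)) ∈ I :=
  ⟨le_max_of_le_left p.2.2.1, max_le p.2.2.2 ((min_le_left _ _).trans (by linarith [p.2.2.2]))⟩

theorem squareInvolution_snd_mem (p : I × I) : max (min (p.1 : ℝ) p.2) (2 * p.1 - 1) ∈ I :=
  ⟨le_max_of_le_left (le_min p.1.2.1 p.2.2.1),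
    max_le ((min_le_left _ _).trans p.1.2.2) (by linarith [p.1.2.2])⟩

/-- The affine map `(t, s) ↦ ((1 + s) / 2, t)` on `t ≤ s`, `(t, s) ↦ ((1 + 3 s) / 2 - t, s)` on
`s ≤ t ≤ (1 + s) / 2` and `(t, s) ↦ (s, 2 t - 1)` on `(1 + s) / 2 ≤ t`, glued by `max` and `min`:
the outer two regions are exchanged and the middle one is reflected onto itself. -/
noncomputable def squareInvolution (p : I × I) : I × I :=
  (⟨_, squareInvolution_fst_mem p⟩, ⟨_, squareInvolution_snd_mem p⟩)

@[fun_prop]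
theorem continuous_squareInvolution : Continuous squareInvolution := by
  unfold squareInvolution
  fun_prop

variable {p : I × I}

theorem squareInvolution_of_le (h : (p.1 : ℝ) ≤ p.2) :
    ((squareInvolution p).1 : ℝ) = (1 + p.2) / 2 ∧ ((squareInvolution p).2 : ℝ) = p.1 := by
  simp only [squareInvolution, max_def, min_def]
  constructor <;> split_ifs <;> linarith [le_one p.1, le_one p.2]

theorem squareInvolution_of_le_of_le (h₁ : (p.2 : ℝ) ≤ p.1) (h₂ : 2 * (p.1 : ℝ) ≤ 1 + p.2) :
    ((squareInvolution p).1 : ℝ) = (1 + 3 * p.2) / 2 - p.1 ∧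
      ((squareInvolution p).2 : ℝ) = p.2 := by
  simp only [squareInvolution, max_def, min_def]
  constructor <;> split_ifs <;> linarith [le_one p.1, le_one p.2]

theorem squareInvolution_of_add_le (h : 1 + (p.2 : ℝ) ≤ 2 * p.1) :
    ((squareInvolution p).1 : ℝ) = p.2 ∧ ((squareInvolution p).2 : ℝ) = 2 * p.1 - 1 := by
  simp only [squareInvolution, max_def, min_def]
  constructor <;> split_ifs <;> linarith [le_one p.1, le_one p.2]

theorem squareInvolution_involutive : Function.Involutive squareInvolution := by
  intro p
  suffices ((squareInvolution (squareInvolution p)).1 : ℝ) = p.1 ∧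
      ((squareInvolution (squareInvolution p)).2 : ℝ) = p.2 from
    Prod.ext (Subtype.ext this.1) (Subtype.ext this.2)
  rcases le_total (p.1 : ℝ) p.2 with h₁ | h₁
  · obtain ⟨e₁, e₂⟩ := squareInvolution_of_le h₁
    obtain ⟨e₁', e₂'⟩ := squareInvolution_of_add_le (p := squareInvolution p)
      (by rw [e₁, e₂]; linarith)
    exact ⟨by rw [e₁', e₂], by rw [e₂', e₁]; ring⟩
  rcases le_total (2 * (p.1 : ℝ)) (1 + p.2) with h₂ | h₂
  · obtain ⟨e₁, e₂⟩ := squareInvolution_of_le_of_le h₁ h₂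
    obtain ⟨e₁', e₂'⟩ := squareInvolution_of_le_of_le (p := squareInvolution p)
      (by rw [e₁, e₂]; linarith) (by rw [e₁, e₂]; linarith)
    exact ⟨by rw [e₁', e₁, e₂]; ring, by rw [e₂', e₂]⟩
  · obtain ⟨e₁, e₂⟩ := squareInvolution_of_add_le h₂
    obtain ⟨e₁', e₂'⟩ := squareInvolution_of_le (p := squareInvolution p)
      (by rw [e₁, e₂]; linarith)
    exact ⟨by rw [e₁', e₂]; ring, by rw [e₂', e₁]⟩

theorem squareInvolution_zero_left (s : I) :
    ((squareInvolution (0, s)).1 : ℝ) = (1 + s) / 2 ∧ (squareInvolution (0, s)).2 = 0 := by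
  obtain ⟨e₁, e₂⟩ := squareInvolution_of_le (p := (0, s)) (nonneg s)
  exact ⟨e₁, Subtype.ext e₂⟩

theorem squareInvolution_zero_right_of_le_half {t : I} (ht : (t : ℝ) ≤ 1 / 2) :
    ((squareInvolution (t, 0)).1 : ℝ) = 1 / 2 - t ∧ (squareInvolution (t, 0)).2 = 0 := by
  obtain ⟨e₁, e₂⟩ := squareInvolution_of_le_of_le (p := (t, 0)) (nonneg t) (by simp; linarith)
  exact ⟨by simpa using e₁, Subtype.ext e₂⟩

theorem squareInvolution_zero_right_of_half_le {t : I} (ht : 1 / 2 ≤ (t : ℝ)) :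
    (squareInvolution (t, 0)).1 = 0 ∧ ((squareInvolution (t, 0)).2 : ℝ) = 2 * t - 1 := by
  obtain ⟨e₁, e₂⟩ := squareInvolution_of_add_le (p := (t, 0)) (by simp; linarith)
  exact ⟨Subtype.ext e₁, e₂⟩

theorem apply_symm_comm {X Z : Type*} {H K : X × I → Z} (h : ∀ x t, K (x, σ t) = H (x, t)) :
    ∀ x t, H (x, σ t) = K (x, t) := fun x t => by
  rw [← h, symm_symm]

end unitInterval

namespace MC

variable {X Y Y' Z : Type*} [TopologicalSpace X] [TopologicalSpace Y] [TopologicalSpace Y']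
  [TopologicalSpace Z]

/-- `projIcc` only makes `2 t` and `2 t - 1` total; on the branch where each is used it is `id`. -/
noncomputable def mapOfHomotopy (f : X → Y) (f' : X → Y') (g : Y → Z) (g' : Y' → Z)
    (H : X × I → Z) (hH0 : ∀ x, H (x, 0) = g (f x)) : MC f → MC g' :=
  lift
    (fun p => if (p.2 : ℝ) ≤ 1 / 2 then base g' (H (p.1, Set.projIcc 0 1 zero_le_one (2 * p.2)))
      else cyl g' (f' p.1) (Set.projIcc 0 1 zero_le_one (2 * p.2 - 1)))
    (base g' ∘ g) (fun x => by simp [hH0])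

section

variable {f : X → Y} {f' : X → Y'} {g : Y → Z} {g' : Y' → Z} {H : X × I → Z}
  {hH0 : ∀ x, H (x, 0) = g (f x)}

theorem mapOfHomotopy_cyl_of_le_half {x : X} {t r : I} (ht : (t : ℝ) ≤ 1 / 2)
    (hr : (r : ℝ) = 2 * t) : mapOfHomotopy f f' g g' H hH0 (cyl f x t) = base g' (H (x, r)) := by
  rw [mapOfHomotopy, lift_cyl, if_pos ht, ← hr, Set.projIcc_val]

theorem mapOfHomotopy_cyl_of_half_le (hH1 : ∀ x, H (x, 1) = g' (f' x)) {x : X} {t r : I}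
    (ht : 1 / 2 ≤ (t : ℝ)) (hr : (r : ℝ) = 2 * t - 1) :
    mapOfHomotopy f f' g g' H hH0 (cyl f x t) = cyl g' (f' x) r := by
  rcases ht.eq_or_lt with ht | ht
  · have hr0 : r = 0 := Subtype.ext (by rw [hr, ← ht]; norm_num)
    rw [mapOfHomotopy_cyl_of_le_half ht.ge (r := 1) (by rw [← ht]; norm_num), hr0, cyl_zero, hH1]
  · rw [mapOfHomotopy, lift_cyl, if_neg (not_le.mpr ht), ← hr, Set.projIcc_val]

theorem continuous_mapOfHomotopy (hf' : Continuous f') (hg : Continuous g) (hH : Continuous H)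
    (hH1 : ∀ x, H (x, 1) = g' (f' x)) : Continuous (mapOfHomotopy f f' g g' H hH0) := by
  refine continuous_lift (Continuous.if_le ?_ ?_ (by fun_prop) continuous_const ?_) (by fun_prop)
  · fun_prop
  · fun_prop
  · rintro ⟨x, t⟩ (ht : (t : ℝ) = 1 / 2)
    simp [ht, cyl_zero, hH1]

end

section

variable {f : X → Y} {f' : X → Y'} {g : Y → Z} {g' : Y' → Z} {H K : X × I → Z}
  (hH0 : ∀ x, H (x, 0) = g (f x)) (hH1 : ∀ x, H (x, 1) = g' (f' x))
  (hK0 : ∀ x, K (x, 0) = g' (f' x)) (hK1 : ∀ x, K (x, 1) = g (f x))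
  (hHK : ∀ x t, K (x, σ t) = H (x, t))

noncomputable def homotopySwap :
    MC (mapOfHomotopy f f' g g' H hH0) → MC (mapOfHomotopy f' f g' g K hK0) :=
  lift
    (liftProd
      (fun p => cyl _ (cyl f' p.1.1 (squareInvolution (p.1.2, p.2)).1)
        (squareInvolution (p.1.2, p.2)).2)
      (fun q => base _ (cyl g q.1 q.2))
      (fun x s => by
        obtain ⟨e₁, e₂⟩ := squareInvolution_zero_left s
        rw [e₂, cyl_zero, mapOfHomotopy_cyl_of_half_le hK1 (r := s)
          (by rw [e₁]; linarith [nonneg s]) (by rw [e₁]; ring)]))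
    (lift (fun q => cyl _ (base f' q.1) q.2) (fun z => base _ (base g z))
      (fun y' => cyl_zero _ _))
    (fun m => by
      induction m using MC.ind with
      | cyl x t =>
        rw [liftProd_cyl]
        rcases le_total (t : ℝ) (1 / 2) with ht | ht
        · obtain ⟨e₁, e₂⟩ := squareInvolution_zero_right_of_le_half ht
          have h2t : 2 * (t : ℝ) ∈ I := ⟨by linarith [nonneg t], by linarith⟩
          rw [mapOfHomotopy_cyl_of_le_half ht (r := ⟨_, h2t⟩) rfl, e₂, cyl_zero,
            mapOfHomotopy_cyl_of_le_half (r := σ ⟨_, h2t⟩) (by rw [e₁]; linarith [nonneg t])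
              (by rw [coe_symm_eq, e₁]; ring), hHK]
          rfl
        · obtain ⟨e₁, e₂⟩ := squareInvolution_zero_right_of_half_le ht
          rw [mapOfHomotopy_cyl_of_half_le hH1 ht e₂, e₁, cyl_zero]
          rfl
      | base y => exact congrArg (base _) (cyl_zero g y))

theorem continuous_homotopySwap : Continuous (homotopySwap hH0 hH1 hK0 hK1 hHK) :=
  continuous_lift (continuous_liftProd (by fun_prop) (by fun_prop))
    (continuous_lift (by fun_prop) (by fun_prop))

theorem homotopySwap_homotopySwap (q : MC (mapOfHomotopy f f' g g' H hH0)) :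
    homotopySwap hK0 hK1 hH0 hH1 (apply_symm_comm hHK)
      (homotopySwap hH0 hH1 hK0 hK1 hHK q) = q := by
  induction q using MC.ind with
  | cyl m s =>
    induction m using MC.ind with
    | cyl x t =>
      change cyl _ (cyl f x (squareInvolution (squareInvolution (t, s))).1)
        (squareInvolution (squareInvolution (t, s))).2 = _
      rw [squareInvolution_involutive]
    | base y => rfl
  | base m =>
    induction m using MC.ind with
    | cyl y' u => rfl
    | base z => rfl

noncomputable def homotopySwapHomeomorph :
    MC (mapOfHomotopy f f' g g' H hH0) ≃ₜ MC (mapOfHomotopy f' f g' g K hK0) where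
  toFun := homotopySwap hH0 hH1 hK0 hK1 hHK
  invFun := homotopySwap hK0 hK1 hH0 hH1 (apply_symm_comm hHK)
  left_inv := homotopySwap_homotopySwap hH0 hH1 hK0 hK1 hHK
  right_inv := homotopySwap_homotopySwap hK0 hK1 hH0 hH1 (apply_symm_comm hHK)
  continuous_toFun := continuous_homotopySwap hH0 hH1 hK0 hK1 hHK
  continuous_invFun := continuous_homotopySwap hK0 hK1 hH0 hH1 (apply_symm_comm hHK)

end

end MC

/-- Lemma (two-parameter mapping cylinder): given a homotopy commutative square of
compact metrizable spaces `g₊ ∘ f₊ ≃ g₋ ∘ f₋` (via a homotopy `H`), the maps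
`Φ₊ : MC(f₊) → MC(g₋)` and `Φ₋ : MC(f₋) → MC(g₊)` described below are well defined
and continuous, and their mapping cylinders `MC(Φ₊)` and `MC(Φ₋)` are homeomorphic. -/
theorem stmt_16 {X Yp Ym Z : Type}
    [TopologicalSpace X]
    [TopologicalSpace Yp]
    [TopologicalSpace Ym]
    [TopologicalSpace Z]
    (fp : X → Yp) (fm : X → Ym) (gp : Yp → Z) (gm : Ym → Z)
    (hfp : Continuous fp) (hfm : Continuous fm)
    (hgp : Continuous gp) (hgm : Continuous gm)
    (H : X × unitInterval → Z) (hH : Continuous H)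
    (hH0 : ∀ x, H (x, 0) = gp (fp x)) (hH1 : ∀ x, H (x, 1) = gm (fm x)) :
    ∃ (Φp : MC fp → MC gm) (Φm : MC fm → MC gp),
      Continuous Φp ∧ Continuous Φm ∧
      (∀ (x : X) (t : ℝ) (h0 : 0 ≤ t) (h2 : t ≤ 1 / 2),
        Φp (MC.cyl fp x ⟨t, h0, by linarith⟩) =
          MC.base gm (H (x, ⟨2 * t, by constructor <;> linarith⟩))) ∧
      (∀ (x : X) (t : ℝ) (h2 : 1 / 2 ≤ t) (h1 : t ≤ 1),
        Φp (MC.cyl fp x ⟨t, by linarith, h1⟩) =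
          MC.cyl gm (fm x) ⟨2 * t - 1, by constructor <;> linarith⟩) ∧
      (∀ y : Yp, Φp (MC.base fp y) = MC.base gm (gp y)) ∧
      (∀ (x : X) (t : ℝ) (h0 : 0 ≤ t) (h2 : t ≤ 1 / 2),
        Φm (MC.cyl fm x ⟨t, h0, by linarith⟩) =
          MC.base gp (H (x, ⟨1 - 2 * t, by constructor <;> linarith⟩))) ∧
      (∀ (x : X) (t : ℝ) (h2 : 1 / 2 ≤ t) (h1 : t ≤ 1),
        Φm (MC.cyl fm x ⟨t, by linarith, h1⟩) =
          MC.cyl gp (fp x) ⟨2 * t - 1, by constructor <;> linarith⟩) ∧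
      (∀ y : Ym, Φm (MC.base fm y) = MC.base gp (gm y)) ∧
      Nonempty (MC Φp ≃ₜ MC Φm) := by
  let K : X × I → Z := fun p => H (p.1, σ p.2)
  have hK0 : ∀ x, K (x, 0) = gm (fm x) := by simp [K, hH1]
  have hK1 : ∀ x, K (x, 1) = gp (fp x) := by simp [K, hH0]
  have hHK : ∀ x t, K (x, σ t) = H (x, t) := by simp [K]
  exact ⟨MC.mapOfHomotopy fp fm gp gm H hH0, MC.mapOfHomotopy fm fp gm gp K hK0,
    MC.continuous_mapOfHomotopy hfm hgp hH hH1,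
    MC.continuous_mapOfHomotopy hfp hgm (hH.comp (by fun_prop)) hK1,
    fun _ _ _ ht => MC.mapOfHomotopy_cyl_of_le_half ht rfl,
    fun _ _ ht _ => MC.mapOfHomotopy_cyl_of_half_le hH1 ht rfl,
    fun _ => rfl,
    fun _ t h0 ht => MC.mapOfHomotopy_cyl_of_le_half (H := K) ht
      (r := ⟨2 * t, by constructor <;> linarith⟩) rfl,
    fun _ _ ht _ => MC.mapOfHomotopy_cyl_of_half_le hK1 ht rfl,
    fun _ => rfl,
    ⟨MC.homotopySwapHomeomorph hH0 hH1 hK0 hK1 hHK⟩⟩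
end
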